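/- arXiv:2305.12362 — 5 statements merged into one kernel-verified Lean document; each statement's English description precedes it below -/
import Mathlib

section
/- Let g : ℂ → ℂ be smooth (infinitely differentiable over ℝ) with compact support and let m ≥ 1 be a natural number. Then the radial principal value of g(z)/z^m exists: there is L ∈ ℂ such that the integrals ∫_{{z : ℂ | ε ≤ ‖z‖}} g(z)/z^m dA(z) converge to L as ε → 0⁺. -/
open MeasureTheory Filter Topology Set Metric

noncomputable section PV

/-- Span of the monomials `z^p * conj z ^ q` with `p + q < m`. -/
def polySpan (m : ℕ) : Submodule ℂ (ℂ → ℂ) :=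
  Submodule.span ℂ
    {f | ∃ p q : ℕ, p + q < m ∧ f = fun z : ℂ => z ^ p * (starRingEnd ℂ) z ^ q}

lemma polySpan_continuous {m : ℕ} {T : ℂ → ℂ} (hT : T ∈ polySpan m) : Continuous T := by
  induction hT using Submodule.span_induction with
  | mem f hf =>
      obtain ⟨p, q, -, rfl⟩ := hf
      exact (continuous_pow p).mul ((Complex.continuous_conj).pow q)
  | zero => exact continuous_const
  | add x y hx hy hx' hy' => exact hx'.add hy'
  | smul a x hx hx' => exact hx'.const_smul a

/-- Multiplication by `re z` raises the degree by at most one. -/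
lemma polySpan_mul_re {m : ℕ} {T : ℂ → ℂ} (hT : T ∈ polySpan m) :
    (fun z : ℂ => (z.re : ℂ) * T z) ∈ polySpan (m + 1) := by
  induction hT using Submodule.span_induction with
  | mem f hf =>
      obtain ⟨p, q, hpq, rfl⟩ := hf
      have : (fun z : ℂ => (z.re : ℂ) * (z ^ p * (starRingEnd ℂ) z ^ q))
          = (1/2 : ℂ) • (fun z : ℂ => z ^ (p+1) * (starRingEnd ℂ) z ^ q)
            + (1/2 : ℂ) • (fun z : ℂ => z ^ p * (starRingEnd ℂ) z ^ (q+1)) := by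
        funext z
        have h := Complex.add_conj z
        simp only [Pi.add_apply, Pi.smul_apply, smul_eq_mul]
        have : (z.re : ℂ) = (z + (starRingEnd ℂ) z) / 2 := by
          rw [h]; push_cast; ring
        rw [this]; ring
      rw [this]
      exact Submodule.add_mem _
        (Submodule.smul_mem _ _ (Submodule.subset_span ⟨p+1, q, by omega, rfl⟩))
        (Submodule.smul_mem _ _ (Submodule.subset_span ⟨p, q+1, by omega, rfl⟩))
  | zero =>
      simp only [Pi.zero_apply, mul_zero]
      exact Submodule.zero_mem _
  | add x y hx hy hx' hy' =>
      have : (fun z : ℂ => (z.re : ℂ) * (x + y) z)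
          = (fun z : ℂ => (z.re : ℂ) * x z) + (fun z : ℂ => (z.re : ℂ) * y z) := by
        funext z; simp [mul_add]
      rw [this]; exact Submodule.add_mem _ hx' hy'
  | smul a x hx hx' =>
      have : (fun z : ℂ => (z.re : ℂ) * (a • x) z)
          = a • (fun z : ℂ => (z.re : ℂ) * x z) := by
        funext z; simp [smul_eq_mul]; ring
      rw [this]; exact Submodule.smul_mem _ _ hx'

lemma polySpan_mul_im {m : ℕ} {T : ℂ → ℂ} (hT : T ∈ polySpan m) :
    (fun z : ℂ => (z.im : ℂ) * T z) ∈ polySpan (m + 1) := by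
  induction hT using Submodule.span_induction with
  | mem f hf =>
      obtain ⟨p, q, hpq, rfl⟩ := hf
      have : (fun z : ℂ => (z.im : ℂ) * (z ^ p * (starRingEnd ℂ) z ^ q))
          = ((2 * Complex.I)⁻¹) • (fun z : ℂ => z ^ (p+1) * (starRingEnd ℂ) z ^ q)
            + (-(2 * Complex.I)⁻¹) • (fun z : ℂ => z ^ p * (starRingEnd ℂ) z ^ (q+1)) := by
        funext z
        have h := Complex.sub_conj z
        simp only [Pi.add_apply, Pi.smul_apply, smul_eq_mul]
        have h2 : (z.im : ℂ) = (z - (starRingEnd ℂ) z) / (2 * Complex.I) := by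
          rw [h]; push_cast
          field_simp
        rw [h2]; ring
      rw [this]
      exact Submodule.add_mem _
        (Submodule.smul_mem _ _ (Submodule.subset_span ⟨p+1, q, by omega, rfl⟩))
        (Submodule.smul_mem _ _ (Submodule.subset_span ⟨p, q+1, by omega, rfl⟩))
  | zero =>
      simp only [Pi.zero_apply, mul_zero]
      exact Submodule.zero_mem _
  | add x y hx hy hx' hy' =>
      have : (fun z : ℂ => (z.im : ℂ) * (x + y) z)
          = (fun z : ℂ => (z.im : ℂ) * x z) + (fun z : ℂ => (z.im : ℂ) * y z) := by
        funext z; simp [mul_add]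
      rw [this]; exact Submodule.add_mem _ hx' hy'
  | smul a x hx hx' =>
      have : (fun z : ℂ => (z.im : ℂ) * (a • x) z)
          = a • (fun z : ℂ => (z.im : ℂ) * x z) := by
        funext z; simp [smul_eq_mul]; ring
      rw [this]; exact Submodule.smul_mem _ _ hx'

/-- Averaging along rays preserves the span. -/
lemma polySpan_avg {m : ℕ} {T : ℂ → ℂ} (hT : T ∈ polySpan m) :
    (fun z : ℂ => ∫ t in (0:ℝ)..1, T (t • z)) ∈ polySpan m := by
  induction hT using Submodule.span_induction with
  | mem f hf =>
      obtain ⟨p, q, hpq, rfl⟩ := hf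
      have key : ∀ z : ℂ, (∫ t in (0:ℝ)..1, (t • z) ^ p * (starRingEnd ℂ) (t • z) ^ q)
          = ((↑(p + q) + 1 : ℝ)⁻¹ : ℂ) * (z ^ p * (starRingEnd ℂ) z ^ q) := by
        intro z
        have e : ∀ t : ℝ, (t • z) ^ p * (starRingEnd ℂ) (t • z) ^ q
            = (t ^ (p + q) : ℝ) • (z ^ p * (starRingEnd ℂ) z ^ q) := by
          intro t
          simp only [Complex.real_smul, map_mul, Complex.conj_ofReal, mul_pow,
            Complex.ofReal_pow, pow_add]
          push_cast
          ring
        simp_rw [e]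
        rw [intervalIntegral.integral_smul_const, integral_pow]
        simp [Complex.real_smul]
      have : (fun z : ℂ => ∫ t in (0:ℝ)..1, (t • z) ^ p * (starRingEnd ℂ) (t • z) ^ q)
          = ((↑(p + q) + 1 : ℝ)⁻¹ : ℂ) • (fun z : ℂ => z ^ p * (starRingEnd ℂ) z ^ q) := by
        funext z; simpa [smul_eq_mul] using key z
      rw [this]
      exact Submodule.smul_mem _ _ (Submodule.subset_span ⟨p, q, hpq, rfl⟩)
  | zero =>
      simp only [Pi.zero_apply, intervalIntegral.integral_zero]
      exact Submodule.zero_mem _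
  | add x y hx hy hx' hy' =>
      have hcx : Continuous x := polySpan_continuous hx
      have hcy : Continuous y := polySpan_continuous hy
      have : (fun z : ℂ => ∫ t in (0:ℝ)..1, (x + y) (t • z))
          = (fun z : ℂ => ∫ t in (0:ℝ)..1, x (t • z))
            + (fun z : ℂ => ∫ t in (0:ℝ)..1, y (t • z)) := by
        funext z
        simp only [Pi.add_apply]
        exact intervalIntegral.integral_add
          ((hcx.comp (continuous_id.smul continuous_const)).intervalIntegrable _ _)
          ((hcy.comp (continuous_id.smul continuous_const)).intervalIntegrable _ _)
      rw [this]; exact Submodule.add_mem _ hx' hy'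
  | smul a x hx hx' =>
      have : (fun z : ℂ => ∫ t in (0:ℝ)..1, (a • x) (t • z))
          = a • (fun z : ℂ => ∫ t in (0:ℝ)..1, x (t • z)) := by
        funext z
        simp only [Pi.smul_apply]
        exact intervalIntegral.integral_smul a _
      rw [this]; exact Submodule.smul_mem _ _ hx'

/-- Multivariate Taylor-type approximation: a smooth function is approximated to order `m`
at the origin by an element of `polySpan m`. -/
lemma taylor_approx (m : ℕ) : ∀ f : ℂ → ℂ, ContDiff ℝ (⊤ : ℕ∞) f →
    ∃ T ∈ polySpan m, ∃ C : ℝ, 0 ≤ C ∧ ∀ z : ℂ, ‖z‖ ≤ 1 → ‖f z - T z‖ ≤ C * ‖z‖ ^ m := by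
  induction m with
  | zero =>
      intro f hf
      obtain ⟨C, hC⟩ := (isCompact_closedBall (0:ℂ) 1).exists_bound_of_continuousOn
        hf.continuous.continuousOn
      refine ⟨0, Submodule.zero_mem _, max C 0, le_max_right _ _, fun z hz => ?_⟩
      simp only [Pi.zero_apply, sub_zero, pow_zero, mul_one]
      exact le_trans (hC z (by simpa [mem_closedBall, dist_zero_right] using hz))
        (le_max_left _ _)
  | succ m ih =>
      intro f hf
      set D := fderiv ℝ f with hD
      have hDsmooth : ContDiff ℝ (⊤ : ℕ∞) D := hf.fderiv_right (by simp)
      have hu : ContDiff ℝ (⊤ : ℕ∞) (fun z => D z 1) := hDsmooth.clm_apply contDiff_const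
      have hv : ContDiff ℝ (⊤ : ℕ∞) (fun z => D z Complex.I) := hDsmooth.clm_apply contDiff_const
      obtain ⟨P, hP, C₁, hC₁0, hC₁⟩ := ih _ hu
      obtain ⟨Q, hQ, C₂, hC₂0, hC₂⟩ := ih _ hv
      have hPc : Continuous P := polySpan_continuous hP
      have hQc : Continuous Q := polySpan_continuous hQ
      set AP : ℂ → ℂ := fun z => ∫ t in (0:ℝ)..1, P (t • z) with hAP
      set AQ : ℂ → ℂ := fun z => ∫ t in (0:ℝ)..1, Q (t • z) with hAQ
      set T : ℂ → ℂ := fun z => f 0 + ((z.re : ℂ) * AP z + (z.im : ℂ) * AQ z) with hT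
      have hTmem : T ∈ polySpan (m + 1) := by
        have h1 : (fun _ : ℂ => f 0) ∈ polySpan (m + 1) := by
          have : (fun _ : ℂ => f 0) = f 0 • (fun z : ℂ => z ^ 0 * (starRingEnd ℂ) z ^ 0) := by
            funext z; simp
          rw [this]
          exact Submodule.smul_mem _ _ (Submodule.subset_span ⟨0, 0, by omega, rfl⟩)
        have h2 := polySpan_mul_re (polySpan_avg hP)
        have h3 := polySpan_mul_im (polySpan_avg hQ)
        exact Submodule.add_mem _ h1 (Submodule.add_mem _ h2 h3)
      refine ⟨T, hTmem, C₁ + C₂, by positivity, fun z hz => ?_⟩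
      -- derivative along the ray
      have hray : ∀ t : ℝ, HasDerivAt (fun s : ℝ => f (s • z)) (D (t • z) z) t := by
        intro t
        have h1 : HasFDerivAt f (D (t • z)) (t • z) :=
          (hf.differentiable (by simp) (t • z)).hasFDerivAt
        have h2 : HasDerivAt (fun s : ℝ => s • z) z t := by
          simpa using (hasDerivAt_id t).smul_const z
        exact h1.comp_hasDerivAt t h2
      have hcontD : Continuous fun t : ℝ => D (t • z) z :=
        ((ContinuousLinearMap.apply ℝ ℂ z).continuous.comp
          (hDsmooth.continuous.comp (continuous_id.smul continuous_const)))
      have hFTC : ∫ t in (0:ℝ)..1, D (t • z) z = f z - f 0 := by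
        have := intervalIntegral.integral_eq_sub_of_hasDerivAt
          (f := fun s : ℝ => f (s • z)) (f' := fun t : ℝ => D (t • z) z)
          (fun t _ => hray t) (hcontD.intervalIntegrable 0 1)
        simpa using this
      have hPint : IntervalIntegrable (fun t : ℝ => P (t • z)) volume 0 1 :=
        (hPc.comp (continuous_id.smul continuous_const)).intervalIntegrable 0 1
      have hQint : IntervalIntegrable (fun t : ℝ => Q (t • z)) volume 0 1 :=
        (hQc.comp (continuous_id.smul continuous_const)).intervalIntegrable 0 1
      have hsplit : f z - T z
          = ∫ t in (0:ℝ)..1,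
              (D (t • z) z - ((z.re : ℂ) * P (t • z) + (z.im : ℂ) * Q (t • z))) := by
        rw [intervalIntegral.integral_sub (hcontD.intervalIntegrable 0 1)
          ((hPint.const_mul _).add (hQint.const_mul _))]
        rw [hFTC, intervalIntegral.integral_add (hPint.const_mul _) (hQint.const_mul _),
          intervalIntegral.integral_const_mul, intervalIntegral.integral_const_mul]
        simp only [hT]
        ring
      rw [hsplit]
      have hbound : ∀ t ∈ Set.uIoc (0:ℝ) 1,
          ‖D (t • z) z - ((z.re : ℂ) * P (t • z) + (z.im : ℂ) * Q (t • z))‖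
            ≤ (C₁ + C₂) * ‖z‖ ^ (m + 1) := by
        intro t ht
        rw [Set.uIoc_of_le (by norm_num : (0:ℝ) ≤ 1)] at ht
        have ht0 : 0 < t := ht.1
        have ht1 : t ≤ 1 := ht.2
        have hw : ‖t • z‖ ≤ ‖z‖ := by
          rw [norm_smul, Real.norm_eq_abs, abs_of_pos ht0]
          exact mul_le_of_le_one_left (norm_nonneg z) ht1
        have hw1 : ‖t • z‖ ≤ 1 := le_trans hw hz
        have hdecomp : D (t • z) z
            = z.re • D (t • z) 1 + z.im • D (t • z) Complex.I := by
          have hz' : z = z.re • (1:ℂ) + z.im • Complex.I := by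
            rw [Complex.real_smul, Complex.real_smul, mul_one]
            exact (Complex.re_add_im z).symm
          have e0 : D (t • z) z = D (t • z) (z.re • (1:ℂ) + z.im • Complex.I) := by
            rw [← hz']
          rw [e0, ContinuousLinearMap.map_add, ContinuousLinearMap.map_smul,
            ContinuousLinearMap.map_smul]
        rw [hdecomp]
        have e1 : z.re • D (t • z) 1 + z.im • D (t • z) Complex.I
            - ((z.re : ℂ) * P (t • z) + (z.im : ℂ) * Q (t • z))
            = z.re • (D (t • z) 1 - P (t • z)) + z.im • (D (t • z) Complex.I - Q (t • z)) := by
          simp [Complex.real_smul, smul_sub]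
          ring
        rw [e1]
        have hre : |z.re| ≤ ‖z‖ := by
          exact Complex.abs_re_le_norm z
        have him : |z.im| ≤ ‖z‖ := by
          exact Complex.abs_im_le_norm z
        have hpow : ‖t • z‖ ^ m ≤ ‖z‖ ^ m := pow_le_pow_left₀ (norm_nonneg _) hw m
        have b1 : |z.re| * ‖D (t • z) 1 - P (t • z)‖ ≤ ‖z‖ * (C₁ * ‖z‖ ^ m) := by
          refine mul_le_mul hre (le_trans (hC₁ _ hw1) ?_) (norm_nonneg _) (norm_nonneg z)
          exact mul_le_mul_of_nonneg_left hpow hC₁0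
        have b2 : |z.im| * ‖D (t • z) Complex.I - Q (t • z)‖ ≤ ‖z‖ * (C₂ * ‖z‖ ^ m) := by
          refine mul_le_mul him (le_trans (hC₂ _ hw1) ?_) (norm_nonneg _) (norm_nonneg z)
          exact mul_le_mul_of_nonneg_left hpow hC₂0
        calc ‖z.re • (D (t • z) 1 - P (t • z)) + z.im • (D (t • z) Complex.I - Q (t • z))‖
            ≤ ‖z.re • (D (t • z) 1 - P (t • z))‖ + ‖z.im • (D (t • z) Complex.I - Q (t • z))‖ :=
              norm_add_le _ _
          _ = |z.re| * ‖D (t • z) 1 - P (t • z)‖ + |z.im| * ‖D (t • z) Complex.I - Q (t • z)‖ := by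
              rw [norm_smul, norm_smul, Real.norm_eq_abs, Real.norm_eq_abs]
          _ ≤ ‖z‖ * (C₁ * ‖z‖ ^ m) + ‖z‖ * (C₂ * ‖z‖ ^ m) := add_le_add b1 b2
          _ = (C₁ + C₂) * ‖z‖ ^ (m + 1) := by ring
      have := intervalIntegral.norm_integral_le_of_norm_le_const hbound
      simpa using this

/-- Integrals of `T z / z^m` over compact rotation-invariant sets avoiding `0` vanish,
for `T` in the span of monomials of degree `< m`. -/
lemma polySpan_integral_vanish {m : ℕ} {T : ℂ → ℂ} (hT : T ∈ polySpan m)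
    {s : Set ℂ} (hsc : IsCompact s) (h0 : (0:ℂ) ∉ s)
    (hrot : ∀ (a : Circle) (z : ℂ), z ∈ s → (a : ℂ) * z ∈ s) :
    IntegrableOn (fun z => T z / z ^ m) s volume ∧ (∫ z in s, T z / z ^ m) = 0 := by
  induction hT using Submodule.span_induction with
  | mem f hf =>
      obtain ⟨p, q, hpq, rfl⟩ := hf
      set F : ℂ → ℂ := fun z => (z ^ p * (starRingEnd ℂ) z ^ q) / z ^ m with hF
      have hcont : ContinuousOn F s := by
        apply ContinuousOn.div
        · exact ((continuous_pow p).mul ((Complex.continuous_conj).pow q)).continuousOn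
        · exact (continuous_pow m).continuousOn
        · intro z hz
          exact pow_ne_zero _ (fun h => h0 (h ▸ hz))
      have hint : IntegrableOn F s := hcont.integrableOn_compact hsc
      refine ⟨hint, ?_⟩
      set n : ℕ := m + q - p with hn
      have hn1 : 1 ≤ n := by omega
      set ω : Circle := Circle.exp (Real.pi / n) with hω
      set w : ℂ := (ω : ℂ) with hw
      have hwne : w ≠ 0 := by
        intro h
        have : ‖w‖ = 1 := Circle.norm_coe ω
        rw [h] at this; simp at this
      have hωn : w ^ n = -1 := by
        rw [hw, hω, Circle.coe_exp, ← Complex.exp_nat_mul]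
        have hne : (n : ℂ) ≠ 0 := Nat.cast_ne_zero.2 (by omega)
        have : (n : ℂ) * (↑(Real.pi / n) * Complex.I) = ↑Real.pi * Complex.I := by
          push_cast
          field_simp
        rw [this, Complex.exp_pi_mul_I]
      have hconj : (starRingEnd ℂ) w = w⁻¹ := by
        rw [hw, ← Circle.coe_inv_eq_conj, Circle.coe_inv]
      have hpn : w ^ p * w ^ n = w ^ q * w ^ m := by
        rw [← pow_add, ← pow_add]
        congr 1
        omega
      have hc : w ^ p = -(w ^ q * w ^ m) := by
        rw [hωn] at hpn
        linear_combination -hpn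
      have hcval : w ^ p * (w ^ q)⁻¹ * (w ^ m)⁻¹ = -1 := by
        field_simp
        linear_combination hc
      have hFz : ∀ z : ℂ, F (w * z) = -F z := by
        intro z
        have expand : F (w * z)
            = (w ^ p * (w ^ q)⁻¹ * (w ^ m)⁻¹) * F z := by
          simp only [hF]
          rw [map_mul, hconj, mul_pow, mul_pow, mul_pow, inv_pow,
            div_eq_mul_inv, div_eq_mul_inv, mul_inv]
          ring
        rw [expand, hcval]
        ring
      have hmp : MeasurePreserving (rotation ω) volume volume :=
        (rotation ω).measurePreserving
      have hemb : MeasurableEmbedding (rotation ω) :=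
        (rotation ω).toHomeomorph.measurableEmbedding
      have hpre : ⇑(rotation ω) ⁻¹' s = s := by
        ext z
        simp only [Set.mem_preimage, rotation_apply]
        constructor
        · intro h
          have h2 := hrot ω⁻¹ _ h
          have : ((ω⁻¹ : Circle) : ℂ) * ((ω : ℂ) * z) = z := by
            rw [← mul_assoc, Circle.coe_inv, inv_mul_cancel₀ hwne, one_mul]
          rwa [this] at h2
        · exact fun h => hrot ω z h
      have key := hmp.setIntegral_preimage_emb hemb F s
      rw [hpre] at key
      have key2 : ∫ z in s, F ((rotation ω) z) = ∫ z in s, -F z := by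
        apply setIntegral_congr_fun (hsc.isClosed.measurableSet)
        intro z _
        show F ((rotation ω) z) = -F z
        rw [rotation_apply]
        exact hFz z
      rw [key2, integral_neg] at key
      have : -(∫ z in s, F z) = ∫ z in s, F z := key
      linear_combination (-(1:ℂ)/2) * this
  | zero =>
      constructor
      · simpa using integrableOn_zero (s := s)
      · simp
  | add x y hx hy hx' hy' =>
      have he : (fun z => (x + y) z / z ^ m)
          = fun z => x z / z ^ m + y z / z ^ m := by
        funext z; simp [add_div]
      constructor
      · rw [he]; exact hx'.1.add hy'.1
      · rw [he, integral_add hx'.1 hy'.1, hx'.2, hy'.2, add_zero]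
  | smul a x hx hx' =>
      have he : (fun z => (a • x) z / z ^ m)
          = fun z => a • (x z / z ^ m) := by
        funext z; simp [smul_eq_mul, mul_div_assoc]
      constructor
      · rw [he]; exact hx'.1.smul a
      · rw [he, integral_smul, hx'.2, smul_zero]

end PV

/-- For `g : ℂ → ℂ` smooth with compact support and `m ≥ 1`, the radial
principal value of `g z / z ^ m` exists. -/
theorem stmt_0 (g : ℂ → ℂ) (hg : ContDiff ℝ (⊤ : ℕ∞) g) (hgc : HasCompactSupport g)
    (m : ℕ) (hm : 1 ≤ m) :
    ∃ L : ℂ,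
      Tendsto (fun ε : ℝ => ∫ z in {z : ℂ | ε ≤ ‖z‖}, g z / z ^ m)
        (𝓝[>] (0 : ℝ)) (𝓝 L) := by
  obtain ⟨T, hT, C, hC0, hC⟩ := taylor_approx m g hg
  have hTc : Continuous T := polySpan_continuous hT
  set h : ℂ → ℂ := fun z => (g z - T z) / z ^ m with hh
  set B : Set ℂ := Metric.closedBall (0:ℂ) 1 with hB
  set c : ℂ := ∫ z in {z : ℂ | 1 < ‖z‖}, g z / z ^ m with hc
  refine ⟨(∫ z in B, h z) + c, ?_⟩
  have hmeas : AEStronglyMeasurable h volume :=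
    (((hg.continuous.sub hTc).measurable.div
      ((continuous_pow m).measurable))).aestronglyMeasurable
  set A : ℝ → Set ℂ := fun ε => {z : ℂ | ε ≤ ‖z‖} ∩ B with hA
  have hScl : ∀ ε : ℝ, IsClosed {z : ℂ | ε ≤ ‖z‖} := fun ε =>
    isClosed_le continuous_const continuous_norm
  have hAmeas : ∀ ε : ℝ, MeasurableSet (A ε) := fun ε =>
    ((hScl ε).inter Metric.isClosed_closedBall).measurableSet
  have hAcomp : ∀ ε : ℝ, IsCompact (A ε) := fun ε =>
    (isCompact_closedBall (0:ℂ) 1).inter_left (hScl ε)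
  have hA0 : ∀ ε : ℝ, 0 < ε → (0:ℂ) ∉ A ε := by
    intro ε hε hmem
    have := hmem.1
    simp only [Set.mem_setOf_eq, norm_zero] at this
    linarith
  have hArot : ∀ ε : ℝ, ∀ (a : Circle) (z : ℂ), z ∈ A ε → (a : ℂ) * z ∈ A ε := by
    intro ε a z hz
    have hnorm : ‖(a : ℂ) * z‖ = ‖z‖ := by
      rw [norm_mul, Circle.norm_coe, one_mul]
    constructor
    · show ε ≤ ‖(a:ℂ) * z‖
      rw [hnorm]; exact hz.1
    · rw [hB, mem_closedBall_zero_iff, hnorm]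
      exact mem_closedBall_zero_iff.1 hz.2
  -- bound on h on the unit ball
  have hbound : ∀ z : ℂ, z ≠ 0 → ‖z‖ ≤ 1 → ‖h z‖ ≤ C := by
    intro z hz hz1
    rw [hh]
    rw [norm_div, norm_pow]
    rw [div_le_iff₀ (pow_pos (norm_pos_iff.2 hz) m)]
    exact hC z hz1
  have hz0ae : ∀ᵐ (z : ℂ), z ≠ 0 := by
    have h1 : (volume : Measure ℂ) {(0:ℂ)} = 0 := measure_singleton 0
    rw [ae_iff]
    convert h1 using 2
    ext z
    simp
  -- dominated convergence
  have hmain : Tendsto (fun ε : ℝ => ∫ z in A ε, h z) (𝓝[>] (0:ℝ))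
      (𝓝 (∫ z in B, h z)) := by
    have hDCT := MeasureTheory.tendsto_integral_filter_of_dominated_convergence
      (μ := volume) (l := 𝓝[>] (0:ℝ)) (F := fun ε => (A ε).indicator h)
      (f := B.indicator h) (bound := B.indicator (fun _ => C))
      (Eventually.of_forall fun ε => hmeas.indicator (hAmeas ε))
      ?_ ?_ ?_
    · have e1 : (fun ε : ℝ => ∫ z, (A ε).indicator h z) = fun ε => ∫ z in A ε, h z := by
        funext ε
        exact integral_indicator (hAmeas ε)
      have e2 : (∫ z, B.indicator h z) = ∫ z in B, h z :=
        integral_indicator measurableSet_closedBall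
      rwa [e1, e2] at hDCT
    · filter_upwards [self_mem_nhdsWithin] with ε hε
      refine Eventually.of_forall fun z => ?_
      by_cases hzA : z ∈ A ε
      · rw [Set.indicator_of_mem hzA, Set.indicator_of_mem hzA.2]
        have hz : z ≠ 0 := by
          intro h0
          exact hA0 ε hε (h0 ▸ hzA)
        exact hbound z hz (mem_closedBall_zero_iff.1 hzA.2)
      · rw [Set.indicator_of_notMem hzA, norm_zero]
        exact Set.indicator_apply_nonneg (fun _ => hC0)
    · exact (IntegrableOn.integrable_indicator
        (integrableOn_const measure_closedBall_lt_top.ne) measurableSet_closedBall)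
    · filter_upwards [hz0ae] with z hz
      by_cases hzB : z ∈ B
      · have hev : Ioo (0:ℝ) ‖z‖ ∈ 𝓝[>] (0:ℝ) :=
          Ioo_mem_nhdsGT (norm_pos_iff.2 hz)
        have heq : (fun ε : ℝ => (A ε).indicator h z) =ᶠ[𝓝[>] (0:ℝ)]
            (fun _ => B.indicator h z) := by
          filter_upwards [hev] with ε hε
          have hzA : z ∈ A ε := ⟨le_of_lt hε.2, hzB⟩
          rw [Set.indicator_of_mem hzA, Set.indicator_of_mem hzB]
        exact Tendsto.congr' heq.symm tendsto_const_nhds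
      · have heq : ∀ ε : ℝ, (A ε).indicator h z = 0 := fun ε =>
          Set.indicator_of_notMem (fun hmem => hzB hmem.2) h
        rw [Set.indicator_of_notMem hzB]
        simp_rw [heq]
        exact tendsto_const_nhds
  have hfinal := hmain.add_const c
  refine Tendsto.congr' ?_ hfinal
  -- eventual equality on (0,1]
  filter_upwards [Ioc_mem_nhdsGT (zero_lt_one' ℝ)]
    with ε hε
  obtain ⟨hε0, hε1⟩ := hε
  set U : Set ℂ := {z : ℂ | 1 < ‖z‖} with hU
  have hUopen : IsOpen U := isOpen_lt continuous_const continuous_norm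
  have hgint : Integrable g := hg.continuous.integrable_of_hasCompactSupport hgc
  have hqmeas : AEStronglyMeasurable (fun z : ℂ => g z / z ^ m) volume :=
    (hg.continuous.measurable.div ((continuous_pow m).measurable)).aestronglyMeasurable
  have hUint : IntegrableOn (fun z : ℂ => g z / z ^ m) U := by
    refine Integrable.mono' (hgint.norm.restrict (s := U)) (hqmeas.restrict) ?_
    rw [ae_restrict_iff' hUopen.measurableSet]
    refine Eventually.of_forall fun z hz => ?_
    rw [norm_div, norm_pow]
    exact div_le_self (norm_nonneg _) (one_le_pow₀ (le_of_lt hz))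
  have hcontq : ContinuousOn (fun z : ℂ => g z / z ^ m) (A ε) := by
    apply ContinuousOn.div hg.continuous.continuousOn (continuous_pow m).continuousOn
    intro z hz
    refine pow_ne_zero _ fun h0 => hA0 ε hε0 (h0 ▸ hz)
  have hgA : IntegrableOn (fun z : ℂ => g z / z ^ m) (A ε) :=
    hcontq.integrableOn_compact (hAcomp ε)
  have hcontT : ContinuousOn (fun z : ℂ => T z / z ^ m) (A ε) := by
    apply ContinuousOn.div hTc.continuousOn (continuous_pow m).continuousOn
    intro z hz
    refine pow_ne_zero _ fun h0 => hA0 ε hε0 (h0 ▸ hz)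
  have hTA : IntegrableOn (fun z : ℂ => T z / z ^ m) (A ε) :=
    hcontT.integrableOn_compact (hAcomp ε)
  have hhA : IntegrableOn h (A ε) := by
    have : ContinuousOn h (A ε) := by
      apply ContinuousOn.div (hg.continuous.sub hTc).continuousOn
        (continuous_pow m).continuousOn
      intro z hz
      refine pow_ne_zero _ fun h0 => hA0 ε hε0 (h0 ▸ hz)
    exact this.integrableOn_compact (hAcomp ε)
  have hvanish := polySpan_integral_vanish hT (hAcomp ε) (hA0 ε hε0) (hArot ε)
  have hsplit : {z : ℂ | ε ≤ ‖z‖} = A ε ∪ U := by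
    ext z
    simp only [hA, hU, hB, Set.mem_setOf_eq, Set.mem_union, Set.mem_inter_iff,
      mem_closedBall_zero_iff]
    constructor
    · intro hz
      by_cases h1 : ‖z‖ ≤ 1
      · exact Or.inl ⟨hz, h1⟩
      · exact Or.inr (lt_of_not_ge h1)
    · rintro (⟨hz, -⟩ | hz)
      · exact hz
      · linarith
  have hdisj : Disjoint (A ε) U := by
    rw [Set.disjoint_left]
    rintro z ⟨-, hz2⟩ hzU
    have h1 : ‖z‖ ≤ 1 := mem_closedBall_zero_iff.1 hz2
    have h2 : 1 < ‖z‖ := hzU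
    linarith
  show (∫ z in A ε, h z) + c = ∫ z in {z : ℂ | ε ≤ ‖z‖}, g z / z ^ m
  rw [hsplit, setIntegral_union hdisj hUopen.measurableSet hgA hUint]
  congr 1
  have heq : ∀ z : ℂ, g z / z ^ m = h z + T z / z ^ m := by
    intro z
    rw [hh, ← add_div, sub_add_cancel]
  calc ∫ z in A ε, h z = (∫ z in A ε, h z) + ∫ z in A ε, T z / z ^ m := by
        rw [hvanish.2, add_zero]
    _ = ∫ z in A ε, (h z + T z / z ^ m) := (integral_add hhA hvanish.1).symm
    _ = ∫ z in A ε, g z / z ^ m := by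
        apply setIntegral_congr_fun (hAmeas ε)
        intro z _
        exact (heq z).symm
end

section
/- Let g : ℂ → ℂ be smooth (infinitely differentiable over ℝ) and let m ≥ 1 be a natural number. Then the circle integrals of g(z)·z^{−m} against dz̄ around the origin tend to zero: the function ε ↦ ∫_{θ ∈ (0, 2π)} g(ε·exp(I·θ)) · (ε·exp(I·θ))^{−m} · (−I·ε·exp(−I·θ)) dθ tends to 0 as ε → 0⁺. -/
open MeasureTheory Filter Topology

private lemma lin_decomp (L : ℂ →L[ℝ] ℂ) (w : ℂ) :
    L w = w * ((L 1 - Complex.I * L Complex.I) / 2) +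
      (starRingEnd ℂ) w * ((L 1 + Complex.I * L Complex.I) / 2) := by
  have hw : (w.re : ℂ) + (w.im : ℂ) * Complex.I = w := Complex.re_add_im w
  have hL : L w = (w.re : ℂ) * L 1 + (w.im : ℂ) * L Complex.I := by
    conv_lhs => rw [← hw]
    have h2 : ((w.re : ℂ) + (w.im : ℂ) * Complex.I) = w.re • (1 : ℂ) + w.im • Complex.I := by
      simp [Complex.real_smul]
    rw [h2, map_add, L.map_smul, L.map_smul]
    simp [Complex.real_smul]
  have hcw : (starRingEnd ℂ) w = (w.re : ℂ) - (w.im : ℂ) * Complex.I := by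
    simp [Complex.ext_iff]
  rw [hL, hcw]
  linear_combination ((L 1 - Complex.I * L Complex.I)/2) * hw + ((w.im:ℂ) * L Complex.I) * Complex.I_sq

private lemma smooth_fderiv_apply (g : ℂ → ℂ) (hg : ContDiff ℝ (⊤ : ℕ∞) g) (v : ℂ) :
    ContDiff ℝ (⊤ : ℕ∞) (fun z => fderiv ℝ g z v) :=
  (hg.fderiv_right (by simp)).clm_apply contDiff_const

set_option maxHeartbeats 1000000 in
private lemma aux (k : ℕ) : ∀ (g : ℂ → ℂ), ContDiff ℝ (⊤ : ℕ∞) g → ∀ n : ℤ, n + k + 2 ≤ 0 →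
    Tendsto (fun ε : ℝ => (ε : ℂ) ^ (-(k : ℤ)) *
        ∫ θ in (0:ℝ)..(2 * Real.pi),
          g ((ε : ℂ) * Complex.exp (Complex.I * (θ:ℂ))) *
            Complex.exp ((n : ℂ) * Complex.I * (θ:ℂ)))
      (𝓝[>] (0 : ℝ)) (𝓝 0) := by
  induction k with
  | zero =>
    intro g hg n hn
    have h2π : (0:ℝ) ≤ 2 * Real.pi := by positivity
    have hn0 : n ≠ 0 := by omega
    have hgc : Continuous g := hg.continuous
    have hc : (n : ℂ) * Complex.I ≠ 0 := by
      simp [Complex.I_ne_zero, hn0]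
    simp only [Nat.cast_zero, neg_zero, zpow_zero, one_mul]
    have hfun : (fun ε : ℝ => ∫ θ in (0:ℝ)..(2 * Real.pi),
        g ((ε : ℂ) * Complex.exp (Complex.I * (θ:ℂ))) * Complex.exp ((n : ℂ) * Complex.I * (θ:ℂ)))
        = fun ε : ℝ => ∫ θ in Set.Ioc (0:ℝ) (2 * Real.pi),
          g ((ε : ℂ) * Complex.exp (Complex.I * (θ:ℂ))) * Complex.exp ((n : ℂ) * Complex.I * (θ:ℂ)) := by
      funext ε; exact intervalIntegral.integral_of_le h2π
    rw [hfun]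
    have hlim : (∫ θ in Set.Ioc (0:ℝ) (2 * Real.pi),
        g 0 * Complex.exp ((n : ℂ) * Complex.I * (θ:ℂ))) = 0 := by
      rw [← intervalIntegral.integral_of_le h2π, intervalIntegral.integral_const_mul,
        integral_exp_mul_complex hc]
      have h1 : Complex.exp ((n:ℂ) * Complex.I * (2 * (Real.pi:ℂ))) = 1 := by
        rw [show ((n:ℂ) * Complex.I * (2 * (Real.pi:ℂ))) = (n:ℤ) * (2 * (Real.pi:ℂ) * Complex.I) by push_cast; ring]
        exact Complex.exp_int_mul_two_pi_mul_I n
      push_cast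
      simp [h1]
    rw [← hlim]
    obtain ⟨C, hC⟩ := (isCompact_closedBall (0:ℂ) 1).exists_bound_of_continuousOn
      (hg.continuous.continuousOn)
    have hnorme : ∀ θ : ℝ, ‖Complex.exp ((n:ℂ) * Complex.I * (θ:ℂ))‖ = 1 := by
      intro θ
      rw [Complex.norm_exp]
      simp
    have hnormI : ∀ θ : ℝ, ‖Complex.exp (Complex.I * (θ:ℂ))‖ = 1 := by
      intro θ
      rw [Complex.norm_exp]
      simp
    apply tendsto_integral_filter_of_dominated_convergence (fun _ => |C|)
    · filter_upwards with ε
      apply Continuous.aestronglyMeasurable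
      exact (hgc.comp (by fun_prop)).mul (by fun_prop)
    · filter_upwards [Ioc_mem_nhdsGT (zero_lt_one' ℝ)] with ε hε
      filter_upwards with θ
      rw [norm_mul, hnorme, mul_one]
      have hmem : (ε : ℂ) * Complex.exp (Complex.I * (θ:ℂ)) ∈ Metric.closedBall (0:ℂ) 1 := by
        rw [Metric.mem_closedBall, dist_zero_right, norm_mul, hnormI, mul_one,
          Complex.norm_real, Real.norm_eq_abs, abs_of_nonneg hε.1.le]
        exact hε.2
      exact (hC _ hmem).trans (le_abs_self C)
    · exact integrable_const _
    · filter_upwards with θ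
      have hcont : ContinuousAt (fun ε : ℝ =>
          g ((ε : ℂ) * Complex.exp (Complex.I * (θ:ℂ))) * Complex.exp ((n : ℂ) * Complex.I * (θ:ℂ))) 0 := by
        apply Continuous.continuousAt
        exact (hgc.comp (by fun_prop)).mul continuous_const
      have := hcont.tendsto.mono_left (nhdsWithin_le_nhds (s := Set.Ioi (0:ℝ)))
      simpa using this
  | succ k IH =>
    intro g hg n hn
    have h2π : (0:ℝ) ≤ 2 * Real.pi := by positivity
    have hn0 : n ≠ 0 := by omega
    have hnC : (n : ℂ) ≠ 0 := by exact_mod_cast hn0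
    set c : ℂ := (n : ℂ) * Complex.I with hcdef
    have hc : c ≠ 0 := by simp [hcdef, Complex.I_ne_zero, hnC]
    set A : ℂ → ℂ := fun z => (fderiv ℝ g z 1 - Complex.I * fderiv ℝ g z Complex.I) / 2 with hAdef
    set B : ℂ → ℂ := fun z => (fderiv ℝ g z 1 + Complex.I * fderiv ℝ g z Complex.I) / 2 with hBdef
    have hA : ContDiff ℝ (⊤ : ℕ∞) A :=
      ((smooth_fderiv_apply g hg 1).sub (contDiff_const.mul (smooth_fderiv_apply g hg Complex.I))).div_const 2
    have hB : ContDiff ℝ (⊤ : ℕ∞) B :=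
      ((smooth_fderiv_apply g hg 1).add (contDiff_const.mul (smooth_fderiv_apply g hg Complex.I))).div_const 2
    have hfa : Continuous (fun z => fderiv ℝ g z) := (hg.fderiv_right (m := (⊤ : ℕ∞)) (by simp)).continuous
    -- the limit function
    have hTA := IH A hA (n + 1) (by omega)
    have hTB := IH B hB (n - 1) (by omega)
    have hT : Tendsto (fun ε : ℝ =>
        (-(1:ℂ)/n) * ((ε : ℂ) ^ (-(k : ℤ)) * ∫ θ in (0:ℝ)..(2 * Real.pi),
          A ((ε : ℂ) * Complex.exp (Complex.I * (θ:ℂ))) *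
            Complex.exp (((n+1 : ℤ) : ℂ) * Complex.I * (θ:ℂ)))
        + ((1:ℂ)/n) * ((ε : ℂ) ^ (-(k : ℤ)) * ∫ θ in (0:ℝ)..(2 * Real.pi),
          B ((ε : ℂ) * Complex.exp (Complex.I * (θ:ℂ))) *
            Complex.exp (((n-1 : ℤ) : ℂ) * Complex.I * (θ:ℂ))))
        (𝓝[>] (0 : ℝ)) (𝓝 0) := by
      have := (hTA.const_mul (-(1:ℂ)/n)).add (hTB.const_mul ((1:ℂ)/n))
      simpa using this
    apply hT.congr'
    filter_upwards [self_mem_nhdsWithin] with ε hε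
    have hε0 : (ε : ℂ) ≠ 0 := by exact_mod_cast (ne_of_gt hε)
    -- the circle map and the various functions
    set z : ℝ → ℂ := fun θ => (ε:ℂ) * Complex.exp (Complex.I * (θ:ℂ)) with hzdef
    set u : ℝ → ℂ := fun θ => g (z θ) with hudef
    set u' : ℝ → ℂ := fun θ => (fderiv ℝ g (z θ)) (z θ * Complex.I) with hu'def
    set v : ℝ → ℂ := fun θ => Complex.exp (c * (θ:ℂ)) / c with hvdef
    set v' : ℝ → ℂ := fun θ => Complex.exp (c * (θ:ℂ)) with hv'def
    have hzcont : Continuous z := by fun_prop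
    have hecont : ∀ j : ℤ, Continuous fun θ : ℝ => Complex.exp ((j:ℂ) * Complex.I * (θ:ℂ)) :=
      fun j => by fun_prop
    have hu : ∀ θ ∈ Set.uIcc (0:ℝ) (2 * Real.pi), HasDerivAt u (u' θ) θ := by
      intro θ _
      have h1 : HasDerivAt (fun θ : ℝ => Complex.I * (θ:ℂ)) Complex.I θ := by
        simpa using ((hasDerivAt_id ((θ:ℂ))).const_mul Complex.I).comp_ofReal
      have h2 : HasDerivAt (fun θ : ℝ => Complex.exp (Complex.I * (θ:ℂ)))
          (Complex.exp (Complex.I * (θ:ℂ)) * Complex.I) θ := h1.cexp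
      have h3 : HasDerivAt z ((ε:ℂ) * (Complex.exp (Complex.I * (θ:ℂ)) * Complex.I)) θ :=
        h2.const_mul _
      have h4 := (hg.differentiable (by simp) (z θ)).hasFDerivAt
      have h5 := h4.comp_hasDerivAt θ h3
      have harg : (ε:ℂ) * (Complex.exp (Complex.I * (θ:ℂ)) * Complex.I) = z θ * Complex.I := by
        rw [hzdef]; ring
      rw [harg] at h5
      exact h5
    have hv : ∀ θ ∈ Set.uIcc (0:ℝ) (2 * Real.pi), HasDerivAt v (v' θ) θ := by
      intro θ _
      have hlin : HasDerivAt (fun y : ℝ => c * (y:ℂ)) c θ := by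
        simpa using ((hasDerivAt_id ((θ:ℂ))).const_mul c).comp_ofReal
      have := hlin.cexp.div_const c
      rwa [mul_div_cancel_right₀ _ hc] at this
    have hu'cont : Continuous u' := by
      apply Continuous.clm_apply (hfa.comp hzcont)
      fun_prop
    have hv'cont : Continuous v' := by fun_prop
    have hIBP := intervalIntegral.integral_mul_deriv_eq_deriv_mul hu hv
      (hu'cont.intervalIntegrable _ _) (hv'cont.intervalIntegrable _ _)
    -- boundary terms vanish
    have hexp2π : Complex.exp (Complex.I * ((2 * Real.pi : ℝ) : ℂ)) = 1 := by
      rw [show (Complex.I * ((2 * Real.pi : ℝ) : ℂ)) = ((1:ℤ) : ℂ) * (2 * (Real.pi:ℂ) * Complex.I) by push_cast; ring]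
      exact Complex.exp_int_mul_two_pi_mul_I 1
    have hc2π : Complex.exp (c * ((2 * Real.pi : ℝ) : ℂ)) = 1 := by
      rw [show (c * ((2 * Real.pi : ℝ) : ℂ)) = (n : ℂ) * (2 * (Real.pi:ℂ) * Complex.I) by rw [hcdef]; push_cast; ring]
      exact_mod_cast Complex.exp_int_mul_two_pi_mul_I n
    have hbound : u (2 * Real.pi) * v (2 * Real.pi) - u 0 * v 0 = 0 := by
      simp only [hudef, hvdef, hzdef, hexp2π, hc2π, mul_one, Complex.ofReal_zero, mul_zero,
        Complex.exp_zero]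
      ring
    rw [hbound, zero_sub] at hIBP
    -- rewrite ∫ u' v
    have hsplit : (∫ θ in (0:ℝ)..(2 * Real.pi), u' θ * v θ)
        = ((ε:ℂ) * Complex.I / c) * (∫ θ in (0:ℝ)..(2 * Real.pi),
            A (z θ) * Complex.exp (((n+1 : ℤ) : ℂ) * Complex.I * (θ:ℂ)))
          - ((ε:ℂ) * Complex.I / c) * (∫ θ in (0:ℝ)..(2 * Real.pi),
            B (z θ) * Complex.exp (((n-1 : ℤ) : ℂ) * Complex.I * (θ:ℂ))) := by
      rw [← intervalIntegral.integral_const_mul, ← intervalIntegral.integral_const_mul,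
        ← intervalIntegral.integral_sub]
      · apply intervalIntegral.integral_congr
        intro θ _
        have hdecomp : (fderiv ℝ g (z θ)) (z θ * Complex.I)
            = (z θ * Complex.I) * A (z θ) + (starRingEnd ℂ) (z θ * Complex.I) * B (z θ) := by
          simp only [hAdef, hBdef]
          exact lin_decomp _ _
        have hconj : (starRingEnd ℂ) (z θ * Complex.I)
            = -((ε:ℂ) * Complex.exp (-(Complex.I * (θ:ℂ))) * Complex.I) := by
          rw [hzdef]
          simp only [map_mul, Complex.conj_I, Complex.conj_ofReal, ← Complex.exp_conj]
          rw [show (-Complex.I * (θ:ℂ)) = -(Complex.I * (θ:ℂ)) by ring]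
          ring
        have he1 : Complex.exp (((n+1 : ℤ) : ℂ) * Complex.I * (θ:ℂ))
            = Complex.exp (Complex.I * (θ:ℂ)) * Complex.exp (c * (θ:ℂ)) := by
          rw [← Complex.exp_add, hcdef]; congr 1; push_cast; ring
        have he2 : Complex.exp (((n-1 : ℤ) : ℂ) * Complex.I * (θ:ℂ))
            = Complex.exp (-(Complex.I * (θ:ℂ))) * Complex.exp (c * (θ:ℂ)) := by
          rw [← Complex.exp_add, hcdef]; congr 1; push_cast; ring
        show u' θ * v θ = _
        simp only [hu'def, hvdef]
        rw [hdecomp, hconj, he1, he2, hzdef]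
        field_simp
        ring
      · exact (continuous_const.mul ((hA.continuous.comp hzcont).mul (hecont (n+1)))).intervalIntegrable _ _
      · exact (continuous_const.mul ((hB.continuous.comp hzcont).mul (hecont (n-1)))).intervalIntegrable _ _
    -- final computation
    have hεpow : (ε:ℂ) ^ (-((k+1:ℕ) : ℤ)) * (ε:ℂ) = (ε:ℂ) ^ (-(k : ℤ)) := by
      rw [show (-(k:ℤ)) = (-((k+1:ℕ):ℤ)) + 1 by push_cast; ring, zpow_add₀ hε0, zpow_one]
    have hfrac : (ε:ℂ) * Complex.I / c = (ε:ℂ) / (n:ℂ) := by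
      rw [hcdef, mul_div_mul_right _ _ Complex.I_ne_zero]
    calc (-(1:ℂ)/n) * ((ε : ℂ) ^ (-(k : ℤ)) * ∫ θ in (0:ℝ)..(2 * Real.pi),
          A ((ε:ℂ) * Complex.exp (Complex.I * (θ:ℂ))) * Complex.exp (((n+1 : ℤ) : ℂ) * Complex.I * (θ:ℂ)))
        + ((1:ℂ)/n) * ((ε : ℂ) ^ (-(k : ℤ)) * ∫ θ in (0:ℝ)..(2 * Real.pi),
          B ((ε:ℂ) * Complex.exp (Complex.I * (θ:ℂ))) * Complex.exp (((n-1 : ℤ) : ℂ) * Complex.I * (θ:ℂ)))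
        = (ε : ℂ) ^ (-((k+1:ℕ) : ℤ)) * (-(∫ θ in (0:ℝ)..(2 * Real.pi), u' θ * v θ)) := by
          rw [hsplit, hfrac, ← hεpow, hzdef]
          ring
      _ = (ε : ℂ) ^ (-((k+1:ℕ) : ℤ)) * ∫ θ in (0:ℝ)..(2 * Real.pi), u θ * v' θ := by rw [← hIBP]
      _ = _ := rfl

/-- For `g : ℂ → ℂ` smooth and `m ≥ 1`, the circle integrals of
`g z · z^{-m}` against `dz̄` around the origin tend to `0` as the radius `ε → 0⁺`. -/
theorem stmt_6 (g : ℂ → ℂ) (hg : ContDiff ℝ (⊤ : ℕ∞) g) (m : ℕ) (hm : 1 ≤ m) :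
    Tendsto (fun ε : ℝ =>
        ∫ θ in Set.Ioo (0 : ℝ) (2 * Real.pi),
          g ((ε : ℂ) * Complex.exp (Complex.I * (θ : ℂ))) *
            ((ε : ℂ) * Complex.exp (Complex.I * (θ : ℂ))) ^ (-(m : ℤ)) *
            (-Complex.I * (ε : ℂ) * Complex.exp (-Complex.I * (θ : ℂ))))
      (𝓝[>] (0 : ℝ)) (𝓝 0) := by
  have h2π : (0:ℝ) ≤ 2 * Real.pi := by positivity
  set k : ℕ := m - 1 with hk
  set n : ℤ := -(m:ℤ) - 1 with hn
  have hkm : (k : ℤ) = (m : ℤ) - 1 := by omega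
  have hnk : n + k + 2 ≤ 0 := by omega
  have key : ∀ ε : ℝ, 0 < ε →
      (∫ θ in Set.Ioo (0 : ℝ) (2 * Real.pi),
          g ((ε : ℂ) * Complex.exp (Complex.I * (θ : ℂ))) *
            ((ε : ℂ) * Complex.exp (Complex.I * (θ : ℂ))) ^ (-(m : ℤ)) *
            (-Complex.I * (ε : ℂ) * Complex.exp (-Complex.I * (θ : ℂ))))
        = -Complex.I * ((ε : ℂ) ^ (-(k : ℤ)) *
            ∫ θ in (0:ℝ)..(2 * Real.pi),
              g ((ε : ℂ) * Complex.exp (Complex.I * (θ:ℂ))) *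
                Complex.exp ((n : ℂ) * Complex.I * (θ:ℂ))) := by
    intro ε hε
    have hε0 : (ε : ℂ) ≠ 0 := by exact_mod_cast hε.ne'
    rw [← integral_Ioc_eq_integral_Ioo, ← intervalIntegral.integral_of_le h2π]
    rw [show -Complex.I * ((ε : ℂ) ^ (-(k : ℤ)) * ∫ θ in (0:ℝ)..(2 * Real.pi),
          g ((ε : ℂ) * Complex.exp (Complex.I * (θ:ℂ))) *
            Complex.exp ((n : ℂ) * Complex.I * (θ:ℂ)))
        = ∫ θ in (0:ℝ)..(2 * Real.pi), (-Complex.I * (ε : ℂ) ^ (-(k : ℤ))) *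
            (g ((ε : ℂ) * Complex.exp (Complex.I * (θ:ℂ))) *
              Complex.exp ((n : ℂ) * Complex.I * (θ:ℂ)))
        from by rw [intervalIntegral.integral_const_mul]; ring]
    apply intervalIntegral.integral_congr
    intro θ _
    dsimp only
    have hzpow : ((ε:ℂ) * Complex.exp (Complex.I * θ)) ^ (-(m:ℤ))
        = (ε:ℂ) ^ (-(m:ℤ)) * Complex.exp ((-(m:ℤ) : ℂ) * (Complex.I * θ)) := by
      rw [mul_zpow]
      congr 1
      rw [← Complex.exp_int_mul]
      norm_num
    have hεpow : (ε:ℂ) ^ (-(k : ℤ)) = (ε:ℂ) ^ (-(m:ℤ)) * (ε:ℂ) := by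
      rw [show -(k:ℤ) = -(m:ℤ) + 1 by omega, zpow_add₀ hε0, zpow_one]
    have hexp : Complex.exp ((-(m:ℤ) : ℂ) * (Complex.I * θ)) * Complex.exp (-Complex.I * θ)
        = Complex.exp ((n : ℂ) * Complex.I * θ) := by
      rw [← Complex.exp_add]
      congr 1
      rw [hn]
      push_cast
      ring
    rw [hzpow, hεpow, ← hexp]
    ring
  have := (aux k g hg n hnk).const_mul (-Complex.I)
  rw [mul_zero] at this
  apply this.congr'
  filter_upwards [self_mem_nhdsWithin] with ε hε
  exact (key ε hε).symm
end

section
/- Let N be a natural number, let φ : ℂ → ℂ be complex-differentiable on the punctured ball {z : ℂ | 0 < ‖z‖ < 2}, and suppose the function z ↦ z^N · φ(z) is bounded on {z : ℂ | 0 < ‖z‖ < 1}. Let u : ℂ → ℂ be smooth (infinitely differentiable over ℝ). Then: (a) the limit R := lim_{ε→0⁺} ∫_{θ ∈ (0,2π)} φ(ε·exp(I·θ)) · u(ε·exp(I·θ)) · I·ε·exp(I·θ) dθ exists; (b) the limit S := lim_{ε→0⁺} ∫_{{z : ℂ | ε ≤ ‖z‖ ∧ ‖z‖ ≤ 1}}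 φ(z) · (∂u/∂z̄)(z) dA(z) exists; (c) 2·I·S = (∫_{θ ∈ (0,2π)} φ(exp(I·θ)) · u(exp(I·θ)) · I·exp(I·θ) dθ) − R. -/
open MeasureTheory Filter Topology

/-- The conjugate Wirtinger derivative `∂f/∂z̄` of `f : ℂ → ℂ`, computed from the real
Fréchet derivative. -/
noncomputable def wirtingerDZBar (f : ℂ → ℂ) : ℂ → ℂ :=
  fun z => (1 / 2 : ℂ) * (fderiv ℝ f z 1 + Complex.I * fderiv ℝ f z Complex.I)

open Set
open scoped ContDiff

noncomputable section

namespace S10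

/-- The circle parametrization. -/
def cir (r θ : ℝ) : ℂ := (r : ℂ) * Complex.exp (Complex.I * θ)

lemma norm_cir (r θ : ℝ) : ‖cir r θ‖ = |r| := by
  rw [cir, norm_mul]
  have : ‖Complex.exp (Complex.I * θ)‖ = 1 := by
    rw [mul_comm, Complex.norm_exp_ofReal_mul_I]
  rw [this, mul_one, Complex.norm_real, Real.norm_eq_abs]

lemma norm_cir_of_nonneg {r : ℝ} (hr : 0 ≤ r) (θ : ℝ) : ‖cir r θ‖ = r := by
  rw [norm_cir, abs_of_nonneg hr]

lemma cir_ne_zero {r : ℝ} (hr : 0 < r) (θ : ℝ) : cir r θ ≠ 0 := by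
  intro h
  have := norm_cir r θ
  rw [h, norm_zero, abs_of_pos hr] at this
  exact hr.ne this

lemma cir_periodic (r : ℝ) : Function.Periodic (cir r) (2 * Real.pi) := by
  intro θ
  unfold cir
  congr 1
  rw [Complex.ofReal_add, mul_add, Complex.exp_add]
  have : Complex.exp (Complex.I * (2 * Real.pi : ℝ)) = 1 := by
    push_cast
    rw [show Complex.I * (2 * Real.pi) = 2 * Real.pi * Complex.I by ring]
    exact Complex.exp_two_pi_mul_I
  rw [this, mul_one]

lemma continuous_cir : Continuous (fun p : ℝ × ℝ => cir p.1 p.2) := by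
  unfold cir; fun_prop

lemma continuous_cir_theta (r : ℝ) : Continuous (fun θ => cir r θ) := by
  unfold cir; fun_prop

lemma hasDerivAt_cir_theta (r θ : ℝ) :
    HasDerivAt (cir r) (Complex.I * cir r θ) θ := by
  have h1 : HasDerivAt (fun θ : ℝ => (θ : ℂ)) 1 θ := Complex.ofRealCLM.hasDerivAt
  have h2 : HasDerivAt (fun θ : ℝ => Complex.I * (θ : ℂ)) Complex.I θ := by
    simpa using h1.const_mul Complex.I
  have h3 : HasDerivAt (fun θ : ℝ => Complex.exp (Complex.I * θ))
      (Complex.exp (Complex.I * θ) * Complex.I) θ := h2.cexp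
  have h4 := h3.const_mul (r : ℂ)
  show HasDerivAt (fun θ : ℝ => (r:ℂ) * Complex.exp (Complex.I * θ)) (Complex.I * ((r:ℂ) * Complex.exp (Complex.I * θ))) θ
  simpa [ mul_comm, mul_left_comm, mul_assoc] using h4

lemma hasDerivAt_cir_r (θ r : ℝ) :
    HasDerivAt (fun r : ℝ => cir r θ) (Complex.exp (Complex.I * θ)) r := by
  have h1 : HasDerivAt (fun r : ℝ => (r : ℂ)) 1 r := Complex.ofRealCLM.hasDerivAt
  simpa [cir] using h1.mul_const (Complex.exp (Complex.I * θ))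

/-- Decomposition of a real-linear map on `ℂ` into Wirtinger parts. -/
lemma clm_apply_decomp (L : ℂ →L[ℝ] ℂ) (w : ℂ) :
    L w = w * ((L 1 - Complex.I * L Complex.I) / 2)
        + (starRingEnd ℂ) w * ((L 1 + Complex.I * L Complex.I) / 2) := by
  have h1 : L w = (w.re : ℂ) * L 1 + (w.im : ℂ) * L Complex.I := by
    rw [show (w.re : ℂ) * L 1 = w.re • L 1 by rw [Complex.real_smul],
        show (w.im : ℂ) * L Complex.I = w.im • L Complex.I by rw [Complex.real_smul],
        ← L.map_smul, ← L.map_smul, ← L.map_add]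
    congr 1
    simp [Complex.real_smul, Complex.re_add_im]
  have h2 : (starRingEnd ℂ) w = (w.re : ℂ) - (w.im : ℂ) * Complex.I := by
    simp [Complex.ext_iff]
  rw [h1, h2]
  have h3 : w = (w.re : ℂ) + (w.im : ℂ) * Complex.I := (Complex.re_add_im w).symm
  set P := L 1
  set Q := L Complex.I
  set a := (w.re : ℂ)
  set b := (w.im : ℂ)
  rw [show w * ((P - Complex.I * Q) / 2) = (a + b * Complex.I) * ((P - Complex.I * Q) / 2) by
    rw [← h3]]
  linear_combination (b * Q) * Complex.I_sq

def dz (p : ℂ → ℂ) : ℂ → ℂ :=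
  fun z => (fderiv ℝ p z 1 - Complex.I * fderiv ℝ p z Complex.I) / 2

def dzbar (p : ℂ → ℂ) : ℂ → ℂ :=
  fun z => (fderiv ℝ p z 1 + Complex.I * fderiv ℝ p z Complex.I) / 2

lemma infty_add_one_le : (∞ : WithTop ℕ∞) + 1 ≤ ∞ := by
  norm_cast

lemma one_le_infty : (1 : WithTop ℕ∞) ≤ ∞ := by
  exact_mod_cast le_top

lemma fderiv_apply_contDiff {p : ℂ → ℂ} (hp : ContDiff ℝ ∞ p) (v : ℂ) :
    ContDiff ℝ ∞ (fun z => fderiv ℝ p z v) :=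
  (hp.fderiv_right infty_add_one_le).clm_apply contDiff_const

lemma dz_contDiff {p : ℂ → ℂ} (hp : ContDiff ℝ ∞ p) : ContDiff ℝ ∞ (dz p) :=
  ((fderiv_apply_contDiff hp 1).sub
    (contDiff_const.mul (fderiv_apply_contDiff hp Complex.I))).div_const 2

lemma dzbar_contDiff {p : ℂ → ℂ} (hp : ContDiff ℝ ∞ p) : ContDiff ℝ ∞ (dzbar p) :=
  ((fderiv_apply_contDiff hp 1).add
    (contDiff_const.mul (fderiv_apply_contDiff hp Complex.I))).div_const 2

lemma dz_cont {p : ℂ → ℂ} (hp : ContDiff ℝ ∞ p) : Continuous (dz p) :=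
  (dz_contDiff hp).continuous

lemma dzbar_cont {p : ℂ → ℂ} (hp : ContDiff ℝ ∞ p) : Continuous (dzbar p) :=
  (dzbar_contDiff hp).continuous

/-- The key circle integrals. -/
def Jk (p : ℂ → ℂ) (k : ℤ) (ε : ℝ) : ℂ :=
  ∫ θ in (0:ℝ)..(2*Real.pi), Complex.I * p (cir ε θ) * (cir ε θ) ^ k

lemma Jk_norm_le {p : ℂ → ℂ} {M : ℝ} (hM : ∀ z : ℂ, ‖z‖ ≤ 1 → ‖p z‖ ≤ M)
    {k : ℤ} {ε : ℝ} (h0 : 0 < ε) (h1 : ε ≤ 1) :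
    ‖Jk p k ε‖ ≤ 2 * Real.pi * (M * ε ^ k) := by
  have key : ∀ θ ∈ Set.uIoc (0:ℝ) (2*Real.pi), ‖Complex.I * p (cir ε θ) * (cir ε θ) ^ k‖
      ≤ M * ε ^ k := by
    intro θ _
    rw [norm_mul, norm_mul, Complex.norm_I, one_mul, norm_zpow, norm_cir_of_nonneg h0.le]
    exact mul_le_mul_of_nonneg_right
      (hM _ (by rw [norm_cir_of_nonneg h0.le]; exact h1)) (zpow_nonneg h0.le _)
  have := intervalIntegral.norm_integral_le_of_norm_le_const key
  rw [sub_zero, abs_of_pos Real.two_pi_pos] at this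
  calc ‖Jk p k ε‖ ≤ M * ε ^ k * (2 * Real.pi) := this
    _ = 2 * Real.pi * (M * ε ^ k) := by ring

lemma Jk_tendsto_zero {p : ℂ → ℂ} (hp : Continuous p) {k : ℤ} {d : ℕ}
    (hkd : 1 ≤ k + 2 * (d : ℤ)) :
    Tendsto (fun ε : ℝ => ((ε:ℂ)) ^ (2*d) * Jk p k ε) (𝓝[>] (0:ℝ)) (𝓝 0) := by
  obtain ⟨M, hM⟩ := (isCompact_closedBall (0:ℂ) 1).exists_bound_of_continuousOn
    hp.continuousOn
  set M' := max M 0 with hM'def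
  have hM' : ∀ z : ℂ, ‖z‖ ≤ 1 → ‖p z‖ ≤ M' := fun z hz =>
    (hM z (by simpa [Metric.mem_closedBall, dist_zero_right] using hz)).trans (le_max_left _ _)
  have hM'0 : 0 ≤ M' := le_max_right _ _
  refine squeeze_zero_norm' (a := fun ε : ℝ => 2 * Real.pi * M' * ε) ?_ ?_
  · filter_upwards [Ioc_mem_nhdsGT_of_mem (show (0:ℝ) ∈ Ico (0:ℝ) 1 by constructor <;> norm_num)]
    intro ε hε
    have h0 : 0 < ε := hε.1
    have h1 : ε ≤ 1 := hε.2
    rw [norm_mul, norm_pow, Complex.norm_real, Real.norm_eq_abs, abs_of_pos h0]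
    calc ε ^ (2*d) * ‖Jk p k ε‖ ≤ ε ^ (2*d) * (2 * Real.pi * (M' * ε ^ k)) := by
          apply mul_le_mul_of_nonneg_left (Jk_norm_le hM' h0 h1) (pow_nonneg h0.le _)
      _ = 2 * Real.pi * M' * ε ^ ((2*d : ℤ) + k) := by
          rw [zpow_add₀ h0.ne', ← zpow_natCast ε (2*d)]; push_cast; ring
      _ ≤ 2 * Real.pi * M' * ε ^ (1:ℤ) := by
          apply mul_le_mul_of_nonneg_left _ (by positivity)
          exact zpow_le_zpow_right_of_le_one₀ h0 h1 (by omega)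
      _ = 2 * Real.pi * M' * ε := by rw [zpow_one]
  · have : Tendsto (fun ε : ℝ => 2 * Real.pi * M' * ε) (𝓝 0) (𝓝 (2 * Real.pi * M' * 0)) :=
      (continuous_const.mul continuous_id).tendsto 0
    rw [mul_zero] at this
    exact this.mono_left nhdsWithin_le_nhds

lemma Jk_base {p : ℂ → ℂ} (hp : Continuous p) :
    Tendsto (fun ε : ℝ => Jk p 0 ε) (𝓝[>] (0:ℝ))
      (𝓝 (((2 * Real.pi : ℝ) : ℂ) * (Complex.I * p 0))) := by
  obtain ⟨M, hM⟩ := (isCompact_closedBall (0:ℂ) 1).exists_bound_of_continuousOn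
    hp.continuousOn
  have hJk : ∀ ε : ℝ, Jk p 0 ε = ∫ θ in Ioc (0:ℝ) (2*Real.pi), Complex.I * p (cir ε θ) := by
    intro ε
    rw [Jk, intervalIntegral.integral_of_le Real.two_pi_pos.le]
    simp
  have htarget : (((2 * Real.pi : ℝ) : ℂ) * (Complex.I * p 0))
      = ∫ _θ in Ioc (0:ℝ) (2*Real.pi), Complex.I * p 0 := by
    rw [setIntegral_const, Real.volume_real_Ioc, sub_zero,
      max_eq_left Real.two_pi_pos.le, Complex.real_smul]
  simp only [hJk, htarget]
  apply tendsto_integral_filter_of_dominated_convergence (bound := fun _ => |M| + 1)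
  · filter_upwards with ε
    exact (Continuous.aestronglyMeasurable (continuous_const.mul (hp.comp (continuous_cir_theta ε))))
  · filter_upwards [Ioc_mem_nhdsGT_of_mem (show (0:ℝ) ∈ Ico (0:ℝ) 1 by constructor <;> norm_num)]
    intro ε hε
    filter_upwards with θ
    rw [norm_mul, Complex.norm_I, one_mul]
    have : cir ε θ ∈ Metric.closedBall (0:ℂ) 1 := by
      simp [Metric.mem_closedBall, dist_zero_right, norm_cir_of_nonneg hε.1.le, hε.2]
    calc ‖p (cir ε θ)‖ ≤ M := hM _ this
      _ ≤ |M| + 1 := by cases abs_cases M <;> linarith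
  · exact integrable_const _
  · filter_upwards with θ
    have hcont : Tendsto (fun ε : ℝ => cir ε θ) (𝓝 0) (𝓝 (cir 0 θ)) :=
      ((continuous_cir.comp (continuous_id.prodMk continuous_const)).tendsto 0)
    have h0 : cir 0 θ = 0 := by simp [cir]
    rw [h0] at hcont
    exact (tendsto_const_nhds.mul (hp.tendsto 0 |>.comp hcont)).mono_left nhdsWithin_le_nhds

lemma exp_I_mul_conj (θ : ℝ) :
    Complex.exp (Complex.I * θ) * (starRingEnd ℂ) (Complex.exp (Complex.I * θ)) = 1 := by
  rw [Complex.mul_conj, Complex.normSq_eq_norm_sq]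
  have : ‖Complex.exp (Complex.I * θ)‖ = 1 := by
    rw [mul_comm, Complex.norm_exp_ofReal_mul_I]
  rw [this]; norm_num

lemma cir_mul_conj {r : ℝ} (θ : ℝ) :
    cir r θ * (starRingEnd ℂ) (cir r θ) = ((r:ℂ))^2 := by
  rw [cir, map_mul, Complex.conj_ofReal]
  have := exp_I_mul_conj θ
  calc (r:ℂ) * Complex.exp (Complex.I * θ) * ((r:ℂ) * (starRingEnd ℂ) (Complex.exp (Complex.I * θ)))
      = (r:ℂ)^2 * (Complex.exp (Complex.I * θ) * (starRingEnd ℂ) (Complex.exp (Complex.I * θ))) := by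
        ring
    _ = (r:ℂ)^2 := by rw [this, mul_one]

/-- Algebraic identity for the integration-by-parts recursion. -/
lemma alg_rec (L : ℂ →L[ℝ] ℂ) (pc c : ℂ) (k : ℤ) (hc : c ≠ 0) {e2 : ℂ}
    (hcc : c * (starRingEnd ℂ) c = e2) :
    L (Complex.I * c) * c ^ k + pc * ((k:ℂ) * c ^ (k-1) * (Complex.I * c))
      = Complex.I * ((L 1 - Complex.I * L Complex.I)/2) * c^(k+1)
        - e2 * (Complex.I * ((L 1 + Complex.I * L Complex.I)/2) * c^(k-1))
        + (k:ℂ) * (Complex.I * pc * c^k) := by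
  subst hcc
  have e1 : c ^ (k+1) = c^(k-1) * c * c := by
    rw [← zpow_add_one₀ hc, ← zpow_add_one₀ hc]; congr 1; ring
  have e2 : c ^ k = c^(k-1) * c := by
    rw [← zpow_add_one₀ hc]; congr 1; ring
  rw [clm_apply_decomp L (Complex.I * c), map_mul, Complex.conj_I, e1, e2]
  ring

lemma Jk_rec {p : ℂ → ℂ} (hp : ContDiff ℝ ∞ p) (k : ℤ) (hk : k ≠ 0) {ε : ℝ} (hε : 0 < ε) :
    Jk p k ε = (-(k:ℂ))⁻¹ * (Jk (dz p) (k+1) ε - ((ε:ℂ))^2 * Jk (dzbar p) (k-1) ε) := by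
  have hcne : ∀ θ : ℝ, cir ε θ ≠ 0 := cir_ne_zero hε
  -- FTC for W θ = p (cir ε θ) * (cir ε θ)^k
  have hW : ∀ θ ∈ uIcc (0:ℝ) (2*Real.pi), HasDerivAt (fun θ => p (cir ε θ) * (cir ε θ)^k)
      (fderiv ℝ p (cir ε θ) (Complex.I * cir ε θ) * (cir ε θ)^k
        + p (cir ε θ) * ((k:ℂ) * (cir ε θ)^(k-1) * (Complex.I * cir ε θ))) θ := by
    intro θ _
    have hc : HasDerivAt (cir ε) (Complex.I * cir ε θ) θ := hasDerivAt_cir_theta ε θ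
    have hp1 : HasFDerivAt p (fderiv ℝ p (cir ε θ)) (cir ε θ) :=
      (hp.differentiable (by simp) (cir ε θ)).hasFDerivAt
    have h1 : HasDerivAt (fun θ => p (cir ε θ))
        (fderiv ℝ p (cir ε θ) (Complex.I * cir ε θ)) θ := hp1.comp_hasDerivAt θ hc
    have h2 : HasDerivAt (fun θ => (cir ε θ)^k)
        ((k:ℂ) * (cir ε θ)^(k-1) * (Complex.I * cir ε θ)) θ := by
      have h0 := (hasDerivAt_zpow k (cir ε θ) (Or.inl (hcne θ))).comp θ hc
      exact h0
    exact h1.mul h2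
  have hcont_fd : Continuous (fun θ : ℝ => fderiv ℝ p (cir ε θ)) :=
    (hp.continuous_fderiv (by simp)).comp (continuous_cir_theta ε)
  have hcont_pc : Continuous (fun θ : ℝ => p (cir ε θ)) :=
    hp.continuous.comp (continuous_cir_theta ε)
  have hcont_zpow : ∀ m : ℤ, Continuous (fun θ : ℝ => (cir ε θ)^m) := by
    intro m
    exact (continuous_cir_theta ε).zpow₀ m (fun θ => Or.inl (hcne θ))
  have hcont_W' : Continuous (fun θ : ℝ => fderiv ℝ p (cir ε θ) (Complex.I * cir ε θ) * (cir ε θ)^k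
        + p (cir ε θ) * ((k:ℂ) * (cir ε θ)^(k-1) * (Complex.I * cir ε θ))) := by
    apply Continuous.add
    · exact (hcont_fd.clm_apply (continuous_const.mul (continuous_cir_theta ε))).mul (hcont_zpow k)
    · exact hcont_pc.mul ((continuous_const.mul (hcont_zpow (k-1))).mul
        (continuous_const.mul (continuous_cir_theta ε)))
  have hFTC := intervalIntegral.integral_eq_sub_of_hasDerivAt hW
    (hcont_W'.intervalIntegrable _ _)
  have hend : cir ε (2*Real.pi) = cir ε 0 := by
    have := (cir_periodic ε) 0
    rw [zero_add] at this
    exact this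
  rw [hend, sub_self] at hFTC
  -- rewrite the integrand via alg_rec
  have hcongr : ∀ θ : ℝ, fderiv ℝ p (cir ε θ) (Complex.I * cir ε θ) * (cir ε θ)^k
        + p (cir ε θ) * ((k:ℂ) * (cir ε θ)^(k-1) * (Complex.I * cir ε θ))
      = Complex.I * dz p (cir ε θ) * (cir ε θ)^(k+1)
        - ((ε:ℂ))^2 * (Complex.I * dzbar p (cir ε θ) * (cir ε θ)^(k-1))
        + (k:ℂ) * (Complex.I * p (cir ε θ) * (cir ε θ)^k) := by
    intro θ
    exact alg_rec (fderiv ℝ p (cir ε θ)) (p (cir ε θ)) (cir ε θ) k (hcne θ) (cir_mul_conj θ)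
  rw [intervalIntegral.integral_congr (g := fun θ => Complex.I * dz p (cir ε θ) * (cir ε θ)^(k+1)
        - ((ε:ℂ))^2 * (Complex.I * dzbar p (cir ε θ) * (cir ε θ)^(k-1))
        + (k:ℂ) * (Complex.I * p (cir ε θ) * (cir ε θ)^k)) (fun θ _ => hcongr θ)] at hFTC
  have hint1 : IntervalIntegrable (fun θ => Complex.I * dz p (cir ε θ) * (cir ε θ)^(k+1))
      volume 0 (2*Real.pi) := by
    apply Continuous.intervalIntegrable
    exact (continuous_const.mul ((dz_cont hp).comp (continuous_cir_theta ε))).mul (hcont_zpow _)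
  have hint2 : IntervalIntegrable
      (fun θ => ((ε:ℂ))^2 * (Complex.I * dzbar p (cir ε θ) * (cir ε θ)^(k-1)))
      volume 0 (2*Real.pi) := by
    apply Continuous.intervalIntegrable
    exact continuous_const.mul ((continuous_const.mul
      ((dzbar_cont hp).comp (continuous_cir_theta ε))).mul (hcont_zpow _))
  have hint3 : IntervalIntegrable (fun θ => (k:ℂ) * (Complex.I * p (cir ε θ) * (cir ε θ)^k))
      volume 0 (2*Real.pi) := by
    apply Continuous.intervalIntegrable
    exact continuous_const.mul ((continuous_const.mul hcont_pc).mul (hcont_zpow _))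
  rw [intervalIntegral.integral_add (hint1.sub hint2) hint3,
    intervalIntegral.integral_sub hint1 hint2,
    intervalIntegral.integral_const_mul, intervalIntegral.integral_const_mul] at hFTC
  have hkc : (k:ℂ) ≠ 0 := Int.cast_ne_zero.mpr hk
  have hJk1 : (∫ θ in (0:ℝ)..(2*Real.pi), Complex.I * dz p (cir ε θ) * (cir ε θ)^(k+1))
      = Jk (dz p) (k+1) ε := rfl
  have hJk2 : (∫ θ in (0:ℝ)..(2*Real.pi), Complex.I * dzbar p (cir ε θ) * (cir ε θ)^(k-1))
      = Jk (dzbar p) (k-1) ε := rfl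
  have hJk3 : (∫ θ in (0:ℝ)..(2*Real.pi), Complex.I * p (cir ε θ) * (cir ε θ)^k)
      = Jk p k ε := rfl
  rw [hJk1, hJk2, hJk3] at hFTC
  rw [inv_mul_eq_div, eq_div_iff (show -(k:ℂ) ≠ 0 by simpa using hkc)]
  linear_combination -hFTC

/-- Combination step for the induction. -/
lemma Jk_combine {p : ℂ → ℂ} {k : ℤ} {d : ℕ} (hp : ContDiff ℝ ∞ p) (hk : k ≠ 0) {L1 L2 : ℂ}
    (h1 : Tendsto (fun ε : ℝ => ((ε:ℂ))^(2*d) * Jk (dz p) (k+1) ε) (𝓝[>] (0:ℝ)) (𝓝 L1))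
    (h2 : Tendsto (fun ε : ℝ => ((ε:ℂ))^(2*(d+1)) * Jk (dzbar p) (k-1) ε) (𝓝[>] (0:ℝ)) (𝓝 L2)) :
    Tendsto (fun ε : ℝ => ((ε:ℂ))^(2*d) * Jk p k ε) (𝓝[>] (0:ℝ))
      (𝓝 ((-(k:ℂ))⁻¹ * (L1 - L2))) := by
  have h3 := (h1.sub h2).const_mul ((-(k:ℂ))⁻¹)
  apply h3.congr'
  filter_upwards [self_mem_nhdsWithin] with ε (hε : 0 < ε)
  rw [Jk_rec hp k hk hε]
  ring

lemma Jk_lim : ∀ (t : ℕ) (k : ℤ), k ≤ 0 → ∀ (d : ℕ), -k ≤ 2*(d:ℤ) + t →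
    ∀ p : ℂ → ℂ, ContDiff ℝ ∞ p →
    ∃ L, Tendsto (fun ε : ℝ => ((ε:ℂ))^(2*d) * Jk p k ε) (𝓝[>] (0:ℝ)) (𝓝 L) := by
  intro t
  induction t with
  | zero =>
    intro k hk d hd p hp
    rcases lt_or_ge 0 (k + 2*(d:ℤ)) with h | h
    · exact ⟨0, Jk_tendsto_zero hp.continuous (by omega)⟩
    · have h0 : k + 2*(d:ℤ) = 0 := by omega
      by_cases hk0 : k = 0
      · have hd0 : d = 0 := by omega
        subst hk0; subst hd0
        refine ⟨((2 * Real.pi : ℝ) : ℂ) * (Complex.I * p 0), ?_⟩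
        simpa using Jk_base hp.continuous
      · refine ⟨(-(k:ℂ))⁻¹ * (0 - 0), Jk_combine hp hk0 ?_ ?_⟩
        · exact Jk_tendsto_zero (dz_cont hp) (by omega)
        · exact Jk_tendsto_zero (dzbar_cont hp) (by omega)
  | succ t ih =>
    intro k hk d hd p hp
    rcases le_or_gt (-k) (2*(d:ℤ) + t) with h | h
    · exact ih k hk d h p hp
    · have hk0 : k ≠ 0 := by omega
      obtain ⟨L1, h1⟩ := ih (k+1) (by omega) d (by omega) (dz p) (dz_contDiff hp)
      obtain ⟨L2, h2⟩ := ih (k-1) (by omega) (d+1) (by omega) (dzbar p) (dzbar_contDiff hp)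
      exact ⟨(-(k:ℂ))⁻¹ * (L1 - L2), Jk_combine hp hk0 h1 h2⟩

lemma Jk_exists_lim {p : ℂ → ℂ} (hp : ContDiff ℝ ∞ p) (k : ℤ) (hk : k ≤ 0) :
    ∃ L, Tendsto (fun ε : ℝ => Jk p k ε) (𝓝[>] (0:ℝ)) (𝓝 L) := by
  obtain ⟨L, hL⟩ := Jk_lim (-k).toNat k hk 0 (by omega) p hp
  refine ⟨L, ?_⟩
  simpa using hL

/-- Algebraic identity behind differentiating the circle integral in `r`. -/
lemma alg_fc (L : ℂ →L[ℝ] ℂ) (e fc : ℂ) (he : e * (starRingEnd ℂ) e = 1) (r : ℝ) :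
    L e * (Complex.I * ((r:ℂ) * e)) + fc * (Complex.I * e)
      = 2 * Complex.I * (r:ℂ) * ((L 1 + Complex.I * L Complex.I)/2)
        + (L (Complex.I * ((r:ℂ) * e)) * e + fc * (Complex.I * e)) := by
  rw [clm_apply_decomp L e, clm_apply_decomp L (Complex.I * ((r:ℂ) * e)),
    map_mul, map_mul, Complex.conj_I, Complex.conj_ofReal]
  linear_combination (2 * Complex.I * (r:ℂ) * ((L 1 + Complex.I * L Complex.I)/2)) * he

def Fc (f : ℂ → ℂ) (r : ℝ) : ℂ :=
  ∫ θ in (0:ℝ)..(2*Real.pi), f (cir r θ) * (Complex.I * cir r θ)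

def Ar (f : ℂ → ℂ) (r : ℝ) : ℂ :=
  ∫ θ in (0:ℝ)..(2*Real.pi), (r:ℂ) * dzbar f (cir r θ)

lemma Ar_cont {f : ℂ → ℂ} (hf : ContDiff ℝ ∞ f) : Continuous (Ar f) := by
  apply intervalIntegral.continuous_parametric_intervalIntegral_of_continuous'
  exact (Complex.continuous_ofReal.comp continuous_fst).mul
    ((dzbar_cont hf).comp continuous_cir)

lemma hasDerivAt_exp_I (θ : ℝ) :
    HasDerivAt (fun θ : ℝ => Complex.exp (Complex.I * θ))
      (Complex.I * Complex.exp (Complex.I * θ)) θ := by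
  have h1 : HasDerivAt (fun θ : ℝ => (θ : ℂ)) 1 θ := Complex.ofRealCLM.hasDerivAt
  have h2 : HasDerivAt (fun θ : ℝ => Complex.I * (θ : ℂ)) Complex.I θ := by
    simpa using h1.const_mul Complex.I
  simpa [mul_comm] using h2.cexp

lemma hasDerivAt_Fc {f : ℂ → ℂ} (hf : ContDiff ℝ ∞ f) {r : ℝ} (hr : 0 < r) :
    HasDerivAt (Fc f) (2 * Complex.I * Ar f r) r := by
  obtain ⟨M1, hM1⟩ := (isCompact_closedBall (0:ℂ) (2*r)).exists_bound_of_continuousOn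
    hf.continuous.continuousOn
  obtain ⟨M2, hM2⟩ := (isCompact_closedBall (0:ℂ) (2*r)).exists_bound_of_continuousOn
    (hf.continuous_fderiv (by simp)).continuousOn
  set F' : ℝ → ℝ → ℂ := fun x θ =>
    fderiv ℝ f (cir x θ) (Complex.exp (Complex.I * θ)) * (Complex.I * cir x θ)
      + f (cir x θ) * (Complex.I * Complex.exp (Complex.I * θ)) with hF'def
  have hmem : ∀ x ∈ Metric.ball r (r/2), ∀ θ : ℝ, cir x θ ∈ Metric.closedBall (0:ℂ) (2*r) := by
    intro x hx θ
    rw [Metric.mem_ball, Real.dist_eq] at hx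
    rw [Metric.mem_closedBall, dist_zero_right, norm_cir]
    cases abs_cases (x - r) <;> cases abs_cases x <;> linarith
  have key := intervalIntegral.hasDerivAt_integral_of_dominated_loc_of_deriv_le
    (F := fun x : ℝ => fun θ : ℝ => f (cir x θ) * (Complex.I * cir x θ)) (F' := F')
    (x₀ := r) (a := (0:ℝ)) (b := 2*Real.pi) (μ := volume)
    (bound := fun _ => |M2| * (2*r) + |M1|) (Metric.ball_mem_nhds r (half_pos hr))
    ?meas ?int ?meas' ?bnd ?bint ?dif
  case meas =>
    filter_upwards with x
    exact (Continuous.aestronglyMeasurable <|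
      (hf.continuous.comp (continuous_cir_theta x)).mul
        (continuous_const.mul (continuous_cir_theta x))).restrict
  case int =>
    exact ((hf.continuous.comp (continuous_cir_theta r)).mul
      (continuous_const.mul (continuous_cir_theta r))).intervalIntegrable _ _
  case meas' =>
    apply Continuous.aestronglyMeasurable ?_ |>.restrict
    apply Continuous.add
    · exact (((hf.continuous_fderiv (by simp)).comp (continuous_cir_theta r)).clm_apply
        (Complex.continuous_exp.comp (continuous_const.mul Complex.continuous_ofReal))).mul
        (continuous_const.mul (continuous_cir_theta r))
    · exact (hf.continuous.comp (continuous_cir_theta r)).mul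
        (continuous_const.mul (Complex.continuous_exp.comp
          (continuous_const.mul Complex.continuous_ofReal)))
  case bnd =>
    filter_upwards with θ
    intro _ x hx
    have hc : cir x θ ∈ Metric.closedBall (0:ℂ) (2*r) := hmem x hx θ
    have hxb : |x| ≤ 2*r := by
      rw [Metric.mem_ball, Real.dist_eq] at hx
      cases abs_cases (x - r) <;> cases abs_cases x <;> linarith
    have he : ‖Complex.exp (Complex.I * θ)‖ = 1 := by
      rw [mul_comm, Complex.norm_exp_ofReal_mul_I]
    rw [hF'def]
    apply le_trans (norm_add_le _ _)
    apply add_le_add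
    · rw [norm_mul, norm_mul, Complex.norm_I, one_mul, norm_cir]
      calc ‖fderiv ℝ f (cir x θ) (Complex.exp (Complex.I * θ))‖ * |x|
          ≤ (‖fderiv ℝ f (cir x θ)‖ * 1) * (2*r) := by
            apply mul_le_mul _ hxb (abs_nonneg x) (by positivity)
            rw [mul_one]
            calc ‖fderiv ℝ f (cir x θ) (Complex.exp (Complex.I * θ))‖
                ≤ ‖fderiv ℝ f (cir x θ)‖ * ‖Complex.exp (Complex.I * θ)‖ :=
                  ContinuousLinearMap.le_opNorm _ _
              _ = ‖fderiv ℝ f (cir x θ)‖ := by rw [he, mul_one]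
        _ ≤ |M2| * (2*r) := by
            apply mul_le_mul_of_nonneg_right _ (by positivity)
            rw [mul_one]
            exact (hM2 _ hc).trans (le_abs_self M2)
    · rw [norm_mul, norm_mul, Complex.norm_I, one_mul, he, mul_one]
      exact (hM1 _ hc).trans (le_abs_self M1)
  case bint => exact intervalIntegrable_const
  case dif =>
    filter_upwards with θ
    intro _ x _
    have h1 : HasDerivAt (fun x : ℝ => cir x θ) (Complex.exp (Complex.I * θ)) x :=
      hasDerivAt_cir_r θ x
    have h2 : HasDerivAt (fun x : ℝ => f (cir x θ))
        (fderiv ℝ f (cir x θ) (Complex.exp (Complex.I * θ))) x :=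
      ((hf.differentiable (by simp) (cir x θ)).hasFDerivAt).comp_hasDerivAt x h1
    have h3 : HasDerivAt (fun x : ℝ => Complex.I * cir x θ)
        (Complex.I * Complex.exp (Complex.I * θ)) x := h1.const_mul Complex.I
    exact h2.mul h3
  obtain ⟨-, hkey⟩ := key
  have heq : (∫ θ in (0:ℝ)..(2*Real.pi), F' r θ) = 2 * Complex.I * Ar f r := by
    have hsplit : ∀ θ : ℝ, F' r θ
        = 2 * Complex.I * ((r:ℂ) * dzbar f (cir r θ))
          + (fderiv ℝ f (cir r θ) (Complex.I * cir r θ) * Complex.exp (Complex.I * θ)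
            + f (cir r θ) * (Complex.I * Complex.exp (Complex.I * θ))) := by
      intro θ
      have halg := alg_fc (fderiv ℝ f (cir r θ)) (Complex.exp (Complex.I * θ)) (f (cir r θ))
        (exp_I_mul_conj θ) r
      show F' r θ = _
      simp only [hF'def, cir, dzbar] at halg ⊢
      linear_combination halg
    rw [intervalIntegral.integral_congr (fun θ _ => hsplit θ)]
    have hG : ∀ θ ∈ uIcc (0:ℝ) (2*Real.pi),
        HasDerivAt (fun θ : ℝ => f (cir r θ) * Complex.exp (Complex.I * θ))
          (fderiv ℝ f (cir r θ) (Complex.I * cir r θ) * Complex.exp (Complex.I * θ)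
            + f (cir r θ) * (Complex.I * Complex.exp (Complex.I * θ))) θ := by
      intro θ _
      have hc : HasDerivAt (cir r) (Complex.I * cir r θ) θ := hasDerivAt_cir_theta r θ
      have h2 : HasDerivAt (fun θ => f (cir r θ))
          (fderiv ℝ f (cir r θ) (Complex.I * cir r θ)) θ :=
        ((hf.differentiable (by simp) (cir r θ)).hasFDerivAt).comp_hasDerivAt θ hc
      exact h2.mul (hasDerivAt_exp_I θ)
    have hGcont : Continuous (fun θ : ℝ =>
        fderiv ℝ f (cir r θ) (Complex.I * cir r θ) * Complex.exp (Complex.I * θ)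
          + f (cir r θ) * (Complex.I * Complex.exp (Complex.I * θ))) := by
      apply Continuous.add
      · exact (((hf.continuous_fderiv (by simp)).comp (continuous_cir_theta r)).clm_apply
          (continuous_const.mul (continuous_cir_theta r))).mul
          (Complex.continuous_exp.comp (continuous_const.mul Complex.continuous_ofReal))
      · exact (hf.continuous.comp (continuous_cir_theta r)).mul
          (continuous_const.mul (Complex.continuous_exp.comp
            (continuous_const.mul Complex.continuous_ofReal)))
    have hGFTC := intervalIntegral.integral_eq_sub_of_hasDerivAt hG
      (hGcont.intervalIntegrable _ _)
    have hend : cir r (2*Real.pi) = cir r 0 := by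
      have := (cir_periodic r) 0
      rwa [zero_add] at this
    have hexpend : Complex.exp (Complex.I * ((2*Real.pi : ℝ):ℂ)) = Complex.exp (Complex.I * ((0:ℝ):ℂ)) := by
      push_cast
      rw [show Complex.I * (2 * Real.pi) = 2 * Real.pi * Complex.I by ring,
        Complex.exp_two_pi_mul_I]
      simp
    rw [hend, hexpend, sub_self] at hGFTC
    have hcontAr : Continuous (fun θ : ℝ => 2 * Complex.I * ((r:ℂ) * dzbar f (cir r θ))) :=
      continuous_const.mul (continuous_const.mul
        ((dzbar_cont hf).comp (continuous_cir_theta r)))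
    rw [intervalIntegral.integral_add (hcontAr.intervalIntegrable _ _)
      (hGcont.intervalIntegrable _ _), hGFTC, add_zero,
      intervalIntegral.integral_const_mul]
    rfl
  rw [heq] at hkey
  exact hkey

lemma annulus_polar (V : ℂ → ℂ) (hV : Continuous V) {ε : ℝ} (hε : 0 < ε) (hε1 : ε ≤ 1) :
    ∫ z in {z : ℂ | ε ≤ ‖z‖ ∧ ‖z‖ ≤ 1}, V z
      = ∫ r in ε..(1:ℝ), ∫ θ in (0:ℝ)..(2*Real.pi), (r:ℂ) * V (cir r θ) := by
  have hπ := Real.pi_pos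
  set Ann := {z : ℂ | ε ≤ ‖z‖ ∧ ‖z‖ ≤ 1} with hAnn
  have hAnnm : MeasurableSet Ann := by
    apply IsClosed.measurableSet
    have : Ann = (fun z : ℂ => ‖z‖) ⁻¹' (Icc ε 1) := by
      ext z; simp [hAnn, Set.mem_Icc]
    rw [this]
    exact isClosed_Icc.preimage continuous_norm
  set Φ : ℝ × ℝ → ℂ := fun q => (q.1:ℂ) * V (cir q.1 q.2) with hΦ
  have hΦc : Continuous Φ :=
    (Complex.continuous_ofReal.comp continuous_fst).mul (hV.comp continuous_cir)
  have hEq : EqOn (fun p : ℝ×ℝ => p.1 • Ann.indicator V (Complex.polarCoord.symm p))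
      ((Icc ε 1 ×ˢ (univ : Set ℝ)).indicator Φ) (Ioi (0:ℝ) ×ˢ Ioo (-Real.pi) Real.pi) := by
    rintro ⟨r, θ⟩ ⟨(hr : r ∈ Ioi 0), hθ⟩
    have hsym : Complex.polarCoord.symm (r, θ) = cir r θ := by
      rw [Complex.polarCoord_symm_apply]
      rw [cir, mul_comm Complex.I ((θ:ℝ):ℂ), Complex.exp_mul_I]
      push_cast
      ring
    have hnorm : ‖cir r θ‖ = r := norm_cir_of_nonneg (le_of_lt hr) θ
    by_cases hmem : ε ≤ r ∧ r ≤ 1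
    · have h1 : cir r θ ∈ Ann := ⟨by rw [hnorm]; exact hmem.1, by rw [hnorm]; exact hmem.2⟩
      have h2 : ((r,θ) : ℝ×ℝ) ∈ Icc ε 1 ×ˢ (univ : Set ℝ) := ⟨hmem, mem_univ _⟩
      simp only [hsym, indicator_of_mem h1, indicator_of_mem h2, hΦ, Complex.real_smul]
    · have h1 : cir r θ ∉ Ann := fun hc => hmem ⟨hnorm ▸ hc.1, hnorm ▸ hc.2⟩
      have h2 : ((r,θ) : ℝ×ℝ) ∉ Icc ε 1 ×ˢ (univ : Set ℝ) := fun hc => hmem hc.1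
      simp only [hsym, indicator_of_notMem h1, indicator_of_notMem h2, smul_zero]
  have hIcc_sub : Icc ε 1 ⊆ Ioi (0:ℝ) := fun x hx => lt_of_lt_of_le hε hx.1
  have hsetEq : (Ioi (0:ℝ) ×ˢ Ioo (-Real.pi) Real.pi) ∩ (Icc ε 1 ×ˢ (univ : Set ℝ))
      = Icc ε 1 ×ˢ Ioo (-Real.pi) Real.pi := by
    rw [Set.prod_inter_prod, inter_univ, inter_eq_self_of_subset_right hIcc_sub]
  have hint : IntegrableOn Φ (Icc ε 1 ×ˢ Ioo (-Real.pi) Real.pi) (volume.prod volume) := by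
    have h1 : IntegrableOn Φ (Icc ε 1 ×ˢ Icc (-Real.pi) Real.pi) volume :=
      hΦc.continuousOn.integrableOn_compact (isCompact_Icc.prod isCompact_Icc)
    rw [Measure.volume_eq_prod] at h1
    exact h1.mono_set (prod_mono Subset.rfl Ioo_subset_Icc_self)
  have hinner : ∀ r : ℝ, (∫ θ in Ioo (-Real.pi) Real.pi, Φ (r, θ))
      = ∫ θ in (0:ℝ)..(2*Real.pi), Φ (r, θ) := by
    intro r
    have hper : Function.Periodic (fun θ => Φ (r, θ)) (2*Real.pi) := by
      intro θ
      simp only [hΦ]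
      rw [cir_periodic r θ]
    have h2 := hper.intervalIntegral_add_eq (-Real.pi) 0
    have e1 : -Real.pi + 2*Real.pi = Real.pi := by ring
    have e2 : (0:ℝ) + 2*Real.pi = 2*Real.pi := by ring
    rw [e1, e2] at h2
    rw [← integral_Ioc_eq_integral_Ioo,
      ← intervalIntegral.integral_of_le (by linarith : -Real.pi ≤ Real.pi)]
    exact h2
  calc ∫ z in Ann, V z = ∫ z, Ann.indicator V z := (integral_indicator hAnnm).symm
    _ = ∫ p in polarCoord.target, p.1 • Ann.indicator V (Complex.polarCoord.symm p) :=
        (Complex.integral_comp_polarCoord_symm (Ann.indicator V)).symm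
    _ = ∫ p in Ioi (0:ℝ) ×ˢ Ioo (-Real.pi) Real.pi,
          p.1 • Ann.indicator V (Complex.polarCoord.symm p) := by rw [polarCoord_target]
    _ = ∫ p in Ioi (0:ℝ) ×ˢ Ioo (-Real.pi) Real.pi,
          ((Icc ε 1 ×ˢ (univ : Set ℝ)).indicator Φ) p :=
        setIntegral_congr_fun (measurableSet_Ioi.prod measurableSet_Ioo) hEq
    _ = ∫ p in (Ioi (0:ℝ) ×ˢ Ioo (-Real.pi) Real.pi) ∩ (Icc ε 1 ×ˢ (univ : Set ℝ)), Φ p :=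
        setIntegral_indicator (measurableSet_Icc.prod MeasurableSet.univ)
    _ = ∫ p in Icc ε 1 ×ˢ Ioo (-Real.pi) Real.pi, Φ p := by rw [hsetEq]
    _ = ∫ r in Icc ε 1, ∫ θ in Ioo (-Real.pi) Real.pi, Φ (r, θ) := by
        rw [Measure.volume_eq_prod]
        exact setIntegral_prod Φ hint
    _ = ∫ r in Icc ε 1, ∫ θ in (0:ℝ)..(2*Real.pi), Φ (r, θ) := by simp_rw [hinner]
    _ = ∫ r in ε..(1:ℝ), ∫ θ in (0:ℝ)..(2*Real.pi), (r:ℂ) * V (cir r θ) := by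
        rw [integral_Icc_eq_integral_Ioc, ← intervalIntegral.integral_of_le hε1]

lemma green {f : ℂ → ℂ} (hf : ContDiff ℝ ∞ f) {ε : ℝ} (hε : 0 < ε) (hε1 : ε ≤ 1) :
    ∫ z in {z : ℂ | ε ≤ ‖z‖ ∧ ‖z‖ ≤ 1}, dzbar f z = (Fc f 1 - Fc f ε) / (2*Complex.I) := by
  rw [annulus_polar (dzbar f) (dzbar_cont hf) hε hε1]
  have hderiv : ∀ r ∈ uIcc ε 1, HasDerivAt (Fc f) (2*Complex.I*(Ar f r)) r := by
    intro r hr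
    rw [uIcc_of_le hε1] at hr
    exact hasDerivAt_Fc hf (lt_of_lt_of_le hε hr.1)
  have hint : IntervalIntegrable (fun r => 2*Complex.I*(Ar f r)) volume ε 1 :=
    (continuous_const.mul (Ar_cont hf)).intervalIntegrable _ _
  have hFTC := intervalIntegral.integral_eq_sub_of_hasDerivAt hderiv hint
  rw [intervalIntegral.integral_const_mul] at hFTC
  have hAr : (∫ r in ε..(1:ℝ), ∫ θ in (0:ℝ)..(2*Real.pi), (r:ℂ) * dzbar f (cir r θ))
      = ∫ r in ε..(1:ℝ), Ar f r := rfl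
  rw [hAr, eq_div_iff (mul_ne_zero two_ne_zero Complex.I_ne_zero)]
  linear_combination hFTC

lemma annulus_measurable (ε : ℝ) : MeasurableSet {z : ℂ | ε ≤ ‖z‖ ∧ ‖z‖ ≤ 1} := by
  apply IsClosed.measurableSet
  have : {z : ℂ | ε ≤ ‖z‖ ∧ ‖z‖ ≤ 1} = (fun z : ℂ => ‖z‖) ⁻¹' (Icc ε 1) := by
    ext z; simp [Set.mem_Icc]
  rw [this]
  exact isClosed_Icc.preimage continuous_norm

end S10

end

open S10

/-- planar contact-term formula: for `φ` holomorphic on the punctured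
ball `{0 < ‖z‖ < 2}` with `z^N · φ z` bounded on `{0 < ‖z‖ < 1}`, and `u` smooth, the
residue limit `R` and the principal-value annulus integral `S` of `φ · ∂u/∂z̄` both
exist, and `2·I·S = (∮_{‖z‖=1} φ·u dz) - R`. -/
theorem stmt_10 (N : ℕ) (φ : ℂ → ℂ)
    (hφ : DifferentiableOn ℂ φ {z : ℂ | 0 < ‖z‖ ∧ ‖z‖ < 2})
    (hb : ∃ C : ℝ, ∀ z : ℂ, 0 < ‖z‖ → ‖z‖ < 1 → ‖z ^ N * φ z‖ ≤ C)
    (u : ℂ → ℂ) (hu : ContDiff ℝ (⊤ : ℕ∞) u) :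
    ∃ R S : ℂ,
      Tendsto (fun ε : ℝ =>
          ∫ θ in Set.Ioo (0 : ℝ) (2 * Real.pi),
            φ ((ε : ℂ) * Complex.exp (Complex.I * (θ : ℂ))) *
              u ((ε : ℂ) * Complex.exp (Complex.I * (θ : ℂ))) *
              (Complex.I * (ε : ℂ) * Complex.exp (Complex.I * (θ : ℂ))))
        (𝓝[>] (0 : ℝ)) (𝓝 R) ∧
      Tendsto (fun ε : ℝ =>
          ∫ z in {z : ℂ | ε ≤ ‖z‖ ∧ ‖z‖ ≤ 1}, φ z * wirtingerDZBar u z)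
        (𝓝[>] (0 : ℝ)) (𝓝 S) ∧
      2 * Complex.I * S =
        (∫ θ in Set.Ioo (0 : ℝ) (2 * Real.pi),
          φ (Complex.exp (Complex.I * (θ : ℂ))) *
            u (Complex.exp (Complex.I * (θ : ℂ))) *
            (Complex.I * Complex.exp (Complex.I * (θ : ℂ)))) - R := by
  classical
  have hu' : ContDiff ℝ ∞ u := hu.of_le (by simp)
  obtain ⟨C, hbC⟩ := hb
  set U : Set ℂ := {z : ℂ | 0 < ‖z‖ ∧ ‖z‖ < 2} with hU
  have hUopen : IsOpen U := by
    have : U = (fun z : ℂ => ‖z‖) ⁻¹' (Set.Ioi 0) ∩ (fun z : ℂ => ‖z‖) ⁻¹' (Set.Iio 2) := by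
      ext z; simp [hU]
    rw [this]
    exact (isOpen_Ioi.preimage continuous_norm).inter (isOpen_Iio.preimage continuous_norm)
  set f₀ : ℂ → ℂ := fun z => z^N * φ z with hf₀
  have hf₀d : DifferentiableOn ℂ f₀ U := (differentiable_pow N).differentiableOn.mul hφ
  have hball1 : Metric.ball (0:ℂ) 1 \ {0} ⊆ U := by
    rintro z ⟨hz1, hz2⟩
    exact ⟨norm_pos_iff.2 hz2, lt_trans (mem_ball_zero_iff.1 hz1) one_lt_two⟩
  set g : ℂ → ℂ := Function.update f₀ 0 (limUnder (𝓝[≠] (0:ℂ)) f₀) with hgdef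
  have hbdd : BddAbove (norm ∘ f₀ '' (Metric.ball (0:ℂ) 1 \ {0})) := by
    refine ⟨C, ?_⟩
    rintro x ⟨z, hz, rfl⟩
    exact hbC z (norm_pos_iff.2 hz.2) (mem_ball_zero_iff.1 hz.1)
  have hg1 : DifferentiableOn ℂ g (Metric.ball (0:ℂ) 1) :=
    Complex.differentiableOn_update_limUnder_of_bddAbove
      (Metric.ball_mem_nhds 0 one_pos) (hf₀d.mono hball1) hbdd
  have hg_eq : ∀ z : ℂ, z ≠ 0 → g z = z^N * φ z :=
    fun z hz => Function.update_of_ne hz _ _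
  have hgd : DifferentiableOn ℂ g (Metric.ball (0:ℂ) 2) := by
    intro z hz
    by_cases hz0 : z = 0
    · subst hz0
      exact (hg1.differentiableAt (Metric.ball_mem_nhds 0 one_pos)).differentiableWithinAt
    · have hzU : z ∈ U := ⟨norm_pos_iff.2 hz0, mem_ball_zero_iff.1 hz⟩
      have hev : f₀ =ᶠ[𝓝 z] g := by
        filter_upwards [compl_singleton_mem_nhds hz0] with w hw
        exact (hg_eq w hw).symm
      exact (hev.differentiableAt_iff.1
        (hf₀d.differentiableAt (hUopen.mem_nhds hzU))).differentiableWithinAt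
  have hgsm : ContDiffOn ℝ ∞ g (Metric.ball (0:ℂ) 2) :=
    (hgd.contDiffOn Metric.isOpen_ball).restrict_scalars ℝ
  set χ : ContDiffBump (0:ℂ) := ⟨3/2, 7/4, by norm_num, by norm_num⟩ with hχ
  set gt : ℂ → ℂ := fun z => χ z • g z with hgt
  have hgtsm : ContDiff ℝ ∞ gt := by
    rw [contDiff_iff_contDiffAt]
    intro z
    by_cases hz : ‖z‖ < 2
    · exact χ.contDiffAt.smul
        (hgsm.contDiffAt (Metric.isOpen_ball.mem_nhds (mem_ball_zero_iff.2 hz)))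
    · have hopen : {w : ℂ | 7/4 < ‖w‖} ∈ 𝓝 z := by
        apply (isOpen_lt continuous_const continuous_norm).mem_nhds
        push_neg at hz
        show (7/4 : ℝ) < ‖z‖
        linarith
      have hev : gt =ᶠ[𝓝 z] (fun _ => (0:ℂ)) := by
        filter_upwards [hopen] with w hw
        have hw0 : χ w = 0 := χ.zero_of_le_dist (by rw [dist_zero_right]; exact le_of_lt hw)
        simp [hgt, hw0]
      exact (contDiffAt_const (c := (0:ℂ))).congr_of_eventuallyEq hev
  have hgt_eq : ∀ z : ℂ, ‖z‖ ≤ 3/2 → gt z = g z := by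
    intro z hz
    have h1 : χ z = 1 := χ.one_of_mem_closedBall
      (by rw [Metric.mem_closedBall, dist_zero_right]; exact hz)
    simp [hgt, h1]
  set h : ℂ → ℂ := fun z => gt z * u z with hh
  have hhsm : ContDiff ℝ ∞ h := hgtsm.mul hu'
  have hh_eq : ∀ z : ℂ, 0 < ‖z‖ → ‖z‖ ≤ 3/2 → h z = z^N * φ z * u z := by
    intro z h0 h32
    show gt z * u z = z^N * φ z * u z
    rw [hgt_eq z h32, hg_eq z (norm_pos_iff.mp h0)]
  obtain ⟨R, hRJ⟩ : ∃ L, Tendsto (fun ε : ℝ => Jk h (1 - (N:ℤ)) ε) (𝓝[>] (0:ℝ)) (𝓝 L) := by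
    rcases Nat.eq_zero_or_pos N with hN | hN
    · subst hN
      refine ⟨0, ?_⟩
      have := Jk_tendsto_zero (p := h) hhsm.continuous (k := 1) (d := 0) (by norm_num)
      simpa using this
    · exact Jk_exists_lim hhsm _ (by omega)
  have hFR_eq : ∀ ε : ℝ, 0 < ε → ε ≤ 1 →
      (∫ θ in Set.Ioo (0 : ℝ) (2 * Real.pi),
          φ ((ε : ℂ) * Complex.exp (Complex.I * (θ : ℂ))) *
            u ((ε : ℂ) * Complex.exp (Complex.I * (θ : ℂ))) *
            (Complex.I * (ε : ℂ) * Complex.exp (Complex.I * (θ : ℂ))))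
        = Jk h (1 - (N:ℤ)) ε := by
    intro ε h0 h1
    rw [Jk, intervalIntegral.integral_of_le Real.two_pi_pos.le, integral_Ioc_eq_integral_Ioo]
    apply setIntegral_congr_fun measurableSet_Ioo
    intro θ _
    have hcn : cir ε θ ≠ 0 := cir_ne_zero h0 θ
    have hnorm : ‖cir ε θ‖ = ε := norm_cir_of_nonneg h0.le θ
    have hhv : h (cir ε θ) = (cir ε θ)^N * φ (cir ε θ) * u (cir ε θ) :=
      hh_eq _ (by rw [hnorm]; exact h0) (by rw [hnorm]; linarith)
    have hzp : (cir ε θ)^((N:ℤ)) * (cir ε θ)^(1-(N:ℤ)) = cir ε θ := by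
      rw [← zpow_add₀ hcn]
      norm_num
    rw [show ((cir ε θ) : ℂ)^N = (cir ε θ)^((N:ℤ)) from (zpow_natCast _ N).symm] at hhv
    simp only [cir] at hhv hzp ⊢
    rw [hhv]
    linear_combination (-(φ ((ε : ℂ) * Complex.exp (Complex.I * (θ : ℂ)))
      * u ((ε : ℂ) * Complex.exp (Complex.I * (θ : ℂ))) * Complex.I)) * hzp
  have hRt : Tendsto (fun ε : ℝ =>
      ∫ θ in Set.Ioo (0 : ℝ) (2 * Real.pi),
        φ ((ε : ℂ) * Complex.exp (Complex.I * (θ : ℂ))) *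
          u ((ε : ℂ) * Complex.exp (Complex.I * (θ : ℂ))) *
          (Complex.I * (ε : ℂ) * Complex.exp (Complex.I * (θ : ℂ))))
      (𝓝[>] (0 : ℝ)) (𝓝 R) := by
    apply hRJ.congr'
    filter_upwards [Ioc_mem_nhdsGT_of_mem (show (0:ℝ) ∈ Set.Ico (0:ℝ) 1 by
      constructor <;> norm_num)] with ε hε
    exact (hFR_eq ε hε.1 hε.2).symm
  set F1s : ℂ := ∫ θ in Set.Ioo (0 : ℝ) (2 * Real.pi),
      φ (Complex.exp (Complex.I * (θ : ℂ))) *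
        u (Complex.exp (Complex.I * (θ : ℂ))) *
        (Complex.I * Complex.exp (Complex.I * (θ : ℂ))) with hF1s
  have key : ∀ ε : ℝ, 0 < ε → ε ≤ 1 →
      (∫ z in {z : ℂ | ε ≤ ‖z‖ ∧ ‖z‖ ≤ 1}, φ z * wirtingerDZBar u z)
        = (F1s - (∫ θ in Set.Ioo (0 : ℝ) (2 * Real.pi),
            φ ((ε : ℂ) * Complex.exp (Complex.I * (θ : ℂ))) *
              u ((ε : ℂ) * Complex.exp (Complex.I * (θ : ℂ))) *
              (Complex.I * (ε : ℂ) * Complex.exp (Complex.I * (θ : ℂ))))) / (2*Complex.I) := by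
    intro ε h0 h1
    set χi : ContDiffBump (0:ℂ) := ⟨ε/2, 3*ε/4, half_pos h0, by linarith⟩ with hχi
    set ft : ℂ → ℂ := fun z => (1 - χi z) • (h z * ((z^N : ℂ))⁻¹) with hft
    have hftsm : ContDiff ℝ ∞ ft := by
      rw [contDiff_iff_contDiffAt]
      intro z
      by_cases hz0 : z = 0
      · subst hz0
        have hev : ft =ᶠ[𝓝 (0:ℂ)] (fun _ => (0:ℂ)) := by
          filter_upwards [Metric.ball_mem_nhds (0:ℂ) (half_pos h0)] with w hw
          have hw1 : χi w = 1 := χi.one_of_mem_closedBall (Metric.ball_subset_closedBall hw)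
          simp [hft, hw1]
        exact (contDiffAt_const (c := (0:ℂ))).congr_of_eventuallyEq hev
      · have hinv : ContDiffAt ℝ ∞ (fun z : ℂ => ((z^N : ℂ))⁻¹) z := by
          have hd : DifferentiableOn ℂ (fun z : ℂ => ((z^N : ℂ))⁻¹) {w : ℂ | w ≠ 0} :=
            (differentiable_pow N).differentiableOn.inv (fun w hw => pow_ne_zero N hw)
          have hcd : ContDiffOn ℝ ∞ (fun z : ℂ => ((z^N : ℂ))⁻¹) {w : ℂ | w ≠ 0} :=
            (hd.contDiffOn (n := ∞) isOpen_ne).restrict_scalars ℝ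
          exact hcd.contDiffAt (isOpen_ne.mem_nhds hz0)
        exact ((contDiff_const.sub χi.contDiff).contDiffAt).smul
          (hhsm.contDiffAt.mul hinv)
    have hft_eq : ∀ z : ℂ, 3*ε/4 ≤ ‖z‖ → ‖z‖ ≤ 3/2 → ft z = φ z * u z := by
      intro z hz1 hz2
      have h0z : 0 < ‖z‖ := lt_of_lt_of_le (by linarith) hz1
      have hz0' : z ≠ 0 := norm_pos_iff.mp h0z
      have hχ0 : χi z = 0 := χi.zero_of_le_dist (by rw [dist_zero_right]; exact hz1)
      show (1 - χi z) • (h z * ((z^N : ℂ))⁻¹) = φ z * u z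
      rw [hχ0, hh_eq z h0z hz2]
      have hpz : (z:ℂ)^N ≠ 0 := pow_ne_zero N hz0'
      field_simp
      rw [sub_zero, one_smul]
    have hdzbar_ft : ∀ z ∈ {z : ℂ | ε ≤ ‖z‖ ∧ ‖z‖ ≤ 1},
        φ z * wirtingerDZBar u z = dzbar ft z := by
      intro z hz
      have h0z : 0 < ‖z‖ := lt_of_lt_of_le h0 hz.1
      have hz0' : z ≠ 0 := norm_pos_iff.mp h0z
      have hzU : z ∈ U := ⟨h0z, lt_of_le_of_lt hz.2 one_lt_two⟩
      have hφz : DifferentiableAt ℂ φ z := hφ.differentiableAt (hUopen.mem_nhds hzU)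
      have hfeq : ft =ᶠ[𝓝 z] (fun w => φ w * u w) := by
        have hopen : IsOpen {w : ℂ | 3*ε/4 < ‖w‖ ∧ ‖w‖ < 3/2} := by
          have : {w : ℂ | 3*ε/4 < ‖w‖ ∧ ‖w‖ < 3/2}
              = (fun w : ℂ => ‖w‖) ⁻¹' (Set.Ioi (3*ε/4)) ∩ (fun w : ℂ => ‖w‖) ⁻¹' (Set.Iio (3/2)) := by
            ext w; simp
          rw [this]
          exact (isOpen_Ioi.preimage continuous_norm).inter (isOpen_Iio.preimage continuous_norm)
        filter_upwards [hopen.mem_nhds ⟨lt_of_lt_of_le (by linarith) hz.1,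
          lt_of_le_of_lt hz.2 (by norm_num)⟩] with w hw
        exact hft_eq w hw.1.le hw.2.le
      have hfd : fderiv ℝ ft z = fderiv ℝ (fun w => φ w * u w) z := hfeq.fderiv_eq
      have hc' : HasFDerivAt φ ((fderiv ℂ φ z).restrictScalars ℝ) z :=
        (hφz.hasFDerivAt).restrictScalars ℝ
      have hd' : HasFDerivAt u (fderiv ℝ u z) z := (hu'.differentiable (by simp) z).hasFDerivAt
      have hfd2 : fderiv ℝ (fun w => φ w * u w) z
          = φ z • (fderiv ℝ u z) + u z • ((fderiv ℂ φ z).restrictScalars ℝ) :=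
        (hc'.mul hd').fderiv
      have hlin : (fderiv ℂ φ z) Complex.I = Complex.I * (fderiv ℂ φ z) 1 := by
        have := ContinuousLinearMap.map_smul (fderiv ℂ φ z) Complex.I (1:ℂ)
        simpa [smul_eq_mul] using this
      show φ z * wirtingerDZBar u z = (fderiv ℝ ft z 1 + Complex.I * fderiv ℝ ft z Complex.I) / 2
      rw [hfd, hfd2]
      simp only [ContinuousLinearMap.add_apply, ContinuousLinearMap.coe_smul', Pi.smul_apply,
        ContinuousLinearMap.coe_restrictScalars', smul_eq_mul, wirtingerDZBar]
      rw [hlin]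
      linear_combination (-(u z * ((fderiv ℂ φ z) 1)) / 2) * Complex.I_sq
    have hFc1 : Fc ft 1 = F1s := by
      rw [Fc, hF1s, intervalIntegral.integral_of_le Real.two_pi_pos.le,
        integral_Ioc_eq_integral_Ioo]
      apply setIntegral_congr_fun measurableSet_Ioo
      intro θ _
      show ft (cir 1 θ) * (Complex.I * cir 1 θ) = _
      have hnorm : ‖cir 1 θ‖ = 1 := norm_cir_of_nonneg one_pos.le θ
      rw [hft_eq _ (by rw [hnorm]; linarith) (by rw [hnorm]; norm_num)]
      simp only [cir, Complex.ofReal_one, one_mul]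
    have hFcε : Fc ft ε = ∫ θ in Set.Ioo (0 : ℝ) (2 * Real.pi),
        φ ((ε : ℂ) * Complex.exp (Complex.I * (θ : ℂ))) *
          u ((ε : ℂ) * Complex.exp (Complex.I * (θ : ℂ))) *
          (Complex.I * (ε : ℂ) * Complex.exp (Complex.I * (θ : ℂ))) := by
      rw [Fc, intervalIntegral.integral_of_le Real.two_pi_pos.le,
        integral_Ioc_eq_integral_Ioo]
      apply setIntegral_congr_fun measurableSet_Ioo
      intro θ _
      show ft (cir ε θ) * (Complex.I * cir ε θ) = _
      have hnorm : ‖cir ε θ‖ = ε := norm_cir_of_nonneg h0.le θ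
      rw [hft_eq _ (by rw [hnorm]; linarith) (by rw [hnorm]; linarith)]
      simp only [cir]
      ring
    calc (∫ z in {z : ℂ | ε ≤ ‖z‖ ∧ ‖z‖ ≤ 1}, φ z * wirtingerDZBar u z)
        = ∫ z in {z : ℂ | ε ≤ ‖z‖ ∧ ‖z‖ ≤ 1}, dzbar ft z :=
          setIntegral_congr_fun (annulus_measurable ε) hdzbar_ft
      _ = (Fc ft 1 - Fc ft ε) / (2*Complex.I) := green hftsm h0 h1
      _ = _ := by rw [hFc1, hFcε]
  set S : ℂ := (F1s - R) / (2*Complex.I) with hSdef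
  refine ⟨R, S, hRt, ?_, ?_⟩
  · have h2 : Tendsto (fun ε : ℝ => (F1s - (∫ θ in Set.Ioo (0 : ℝ) (2 * Real.pi),
        φ ((ε : ℂ) * Complex.exp (Complex.I * (θ : ℂ))) *
          u ((ε : ℂ) * Complex.exp (Complex.I * (θ : ℂ))) *
          (Complex.I * (ε : ℂ) * Complex.exp (Complex.I * (θ : ℂ))))) / (2*Complex.I))
        (𝓝[>] (0:ℝ)) (𝓝 S) := by
      rw [hSdef]
      exact (tendsto_const_nhds.sub hRt).div_const _
    apply h2.congr'
    filter_upwards [Ioc_mem_nhdsGT_of_mem (show (0:ℝ) ∈ Set.Ico (0:ℝ) 1 by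
      constructor <;> norm_num)] with ε hε
    exact (key ε hε.1 hε.2).symm
  · rw [hSdef]
    have h2I : (2*Complex.I) ≠ 0 := mul_ne_zero two_ne_zero Complex.I_ne_zero
    field_simp
end

section
/- Let F : ℂ → ℂ be complex-differentiable on the open unit ball {z : ℂ | ‖z‖ < 1} and not identically zero on it. Then the circle integrals of log|F|² against dz̄ around the origin tend to zero: the function ε ↦ ∫_{θ ∈ (0,2π)} ((Real.log ((Complex.abs (F(ε·exp(I·θ))))^2) : ℂ)) · (−I·ε·exp(−I·θ)) dθ tends to 0 as ε → 0⁺. -/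
open MeasureTheory Filter Topology

/-! Near `0`, `F z = z ^ n • g z` with `n` the (finite) order of `F` at `0` and `g` continuous and
nonvanishing, so `|log ‖F z‖| ≤ n |log ‖z‖| + C`. On the circle of radius `ε` the integrand is
therefore `O(ε |log ε| + ε)`, which tends to `0`. The order is finite because `F` does not vanish
identically on the connected disc. -/

theorem tendsto_mul_abs_log_add_nhdsGT_zero (a C : ℝ) :
    Tendsto (fun ε : ℝ => ε * (a * |Real.log ε| + C)) (𝓝[>] 0) (𝓝 0) := by
  have hlog : Tendsto (fun ε : ℝ => |ε * Real.log ε|) (𝓝[>] 0) (𝓝 0) := by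
    simpa using (Real.continuous_mul_log.abs.tendsto 0).mono_left nhdsWithin_le_nhds
  have hid : Tendsto (fun ε : ℝ => ε) (𝓝[>] 0) (𝓝 0) := nhdsWithin_le_nhds
  refine ((hlog.const_mul a).add (hid.mul_const C)).congr' ?_ |>.trans (by simp)
  filter_upwards [self_mem_nhdsWithin] with ε (hε : 0 < ε)
  rw [abs_mul, abs_of_pos hε]
  ring

theorem AnalyticAt.exists_eventually_abs_log_norm_le {𝕜 E : Type*} [NontriviallyNormedField 𝕜]
    [NormedAddCommGroup E] [NormedSpace 𝕜 E] {f : 𝕜 → E} {z₀ : 𝕜} (hf : AnalyticAt 𝕜 f z₀)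
    (hord : analyticOrderAt f z₀ ≠ ⊤) :
    ∃ C : ℝ, ∀ᶠ z in 𝓝[≠] z₀,
      |Real.log ‖f z‖| ≤ analyticOrderNatAt f z₀ * |Real.log ‖z - z₀‖| + C := by
  obtain ⟨g, hg, hg₀, hfg⟩ := hf.analyticOrderAt_ne_top.mp hord
  have hlogg : ContinuousAt (fun z => |Real.log ‖g z‖|) z₀ :=
    (hg.continuousAt.norm.log (norm_ne_zero_iff.mpr hg₀)).abs
  refine ⟨|Real.log ‖g z₀‖| + 1, ?_⟩
  filter_upwards [nhdsWithin_le_nhds hfg, nhdsWithin_le_nhds (hg.continuousAt.eventually_ne hg₀),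
    nhdsWithin_le_nhds (hlogg.eventually_lt continuousAt_const (lt_add_one _)),
    self_mem_nhdsWithin] with z hfz hgz hbound (hz : z ≠ z₀)
  have hsplit :
      Real.log ‖f z‖ = analyticOrderNatAt f z₀ * Real.log ‖z - z₀‖ + Real.log ‖g z‖ := by
    have hzz₀ : ‖z - z₀‖ ^ analyticOrderNatAt f z₀ ≠ 0 :=
      pow_ne_zero _ (norm_ne_zero_iff.mpr (sub_ne_zero.mpr hz))
    rw [hfz, norm_smul, norm_pow, Real.log_mul hzz₀ (norm_ne_zero_iff.mpr hgz), Real.log_pow]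
  calc |Real.log ‖f z‖|
      ≤ |(analyticOrderNatAt f z₀ : ℝ) * Real.log ‖z - z₀‖| + |Real.log ‖g z‖| := by
        rw [hsplit]; exact abs_add_le _ _
    _ ≤ analyticOrderNatAt f z₀ * |Real.log ‖z - z₀‖| + (|Real.log ‖g z₀‖| + 1) := by
        rw [abs_mul, Nat.abs_cast]; gcongr

theorem tendsto_setIntegral_circle_mul_dzbar_of_norm_le_log {h : ℂ → ℂ} {a C : ℝ}
    (hh : ∀ᶠ z in 𝓝[≠] 0, ‖h z‖ ≤ a * |Real.log ‖z‖| + C) :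
    Tendsto (fun ε : ℝ =>
        ∫ θ in Set.Ioo (0 : ℝ) (2 * Real.pi),
          h ((ε : ℂ) * Complex.exp (Complex.I * (θ : ℂ))) *
            (-Complex.I * (ε : ℂ) * Complex.exp (-Complex.I * (θ : ℂ))))
      (𝓝[>] (0 : ℝ)) (𝓝 0) := by
  obtain ⟨δ, hδ, hδh⟩ := Metric.eventually_nhds_iff.mp (eventually_nhdsWithin_iff.mp hh)
  refine squeeze_zero_norm' ?_ ((tendsto_mul_abs_log_add_nhdsGT_zero a C).mul_const
    (volume.real (Set.Ioo 0 (2 * Real.pi))) |>.trans (by simp))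
  filter_upwards [Ioo_mem_nhdsGT hδ] with ε ⟨hε₀, hεδ⟩
  refine norm_setIntegral_le_of_norm_le_const measure_Ioo_lt_top fun θ _ => ?_
  have hnorm : ‖(ε : ℂ) * Complex.exp (Complex.I * (θ : ℂ))‖ = ε := by
    simp [Complex.norm_exp, abs_of_pos hε₀]
  have hdz : ‖-Complex.I * (ε : ℂ) * Complex.exp (-Complex.I * (θ : ℂ))‖ = ε := by
    simp [Complex.norm_exp, abs_of_pos hε₀]
  have hbound := hδh (y := (ε : ℂ) * Complex.exp (Complex.I * (θ : ℂ)))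
    (by rwa [dist_zero_right, hnorm])
    (by rw [Set.mem_compl_singleton_iff, ← norm_ne_zero_iff, hnorm]; exact hε₀.ne')
  rw [hnorm] at hbound
  rw [norm_mul, hdz, mul_comm]
  exact mul_le_mul_of_nonneg_left hbound hε₀.le

/-- For `F : ℂ → ℂ` holomorphic on the open unit ball and not identically
zero there, the circle integrals of `log |F|²` against `dz̄` around the origin tend to
`0` as the radius `ε → 0⁺`. -/
theorem stmt_11 (F : ℂ → ℂ)
    (hF : DifferentiableOn ℂ F {z : ℂ | ‖z‖ < 1})
    (hne : ∃ z : ℂ, ‖z‖ < 1 ∧ F z ≠ 0) :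
    Tendsto (fun ε : ℝ =>
        ∫ θ in Set.Ioo (0 : ℝ) (2 * Real.pi),
          ((Real.log (‖F ((ε : ℂ) * Complex.exp (Complex.I * (θ : ℂ)))‖ ^ 2) : ℂ)) *
            (-Complex.I * (ε : ℂ) * Complex.exp (-Complex.I * (θ : ℂ))))
      (𝓝[>] (0 : ℝ)) (𝓝 0) := by
  have hball : {z : ℂ | ‖z‖ < 1} = Metric.ball 0 1 := by ext; simp
  have han : AnalyticOnNhd ℂ F (Metric.ball 0 1) :=
    (hball ▸ hF).analyticOnNhd Metric.isOpen_ball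
  obtain ⟨z, hz, hFz⟩ := hne
  rw [← mem_ball_zero_iff] at hz
  have hord : analyticOrderAt F 0 ≠ ⊤ :=
    han.analyticOrderAt_ne_top_of_isPreconnected (convex_ball 0 1).isPreconnected hz
      (Metric.mem_ball_self one_pos) (by simp [(han z hz).analyticOrderAt_eq_zero.mpr hFz])
  obtain ⟨C, hC⟩ := (han 0 (Metric.mem_ball_self one_pos)).exists_eventually_abs_log_norm_le hord
  refine tendsto_setIntegral_circle_mul_dzbar_of_norm_le_log
    (h := fun w => (Real.log (‖F w‖ ^ 2) : ℂ)) (a := 2 * analyticOrderNatAt F 0) (C := 2 * C) ?_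
  filter_upwards [hC] with w hw
  rw [sub_zero] at hw
  rw [Complex.norm_real, Real.norm_eq_abs, Real.log_pow, abs_mul, Nat.abs_cast]
  push_cast
  linarith
end

section
/- The function (z : Fin 3 → ℂ) ↦ 1/(‖z 0 − z 1‖ · ‖z 1 − z 2‖ · ‖z 2 − z 0‖), from (Fin 3 → ℂ) to ℝ, is integrable on the open unit polydisc {z : Fin 3 → ℂ | ∀ i, ‖z i‖ < 1} with respect to the (product) Lebesgue measure on Fin 3 → ℂ. -/
/-!
By AM-GM applied to `(ab)^(-3/2)`, `(bc)^(-3/2)`, `(ca)^(-3/2)`, the density `1 / (abc)` is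
bounded by the sum of these three terms, where `a, b, c` are the distances between the points.
Each term is singular along only two of the three diagonals, and after the unimodular shear
`(z₀, z₁, z₂) ↦ (z₀ - z₁, z₁ - z₂, z₂)` it becomes a product `‖u‖^(-3/2) ‖v‖^(-3/2)` in separate
variables, which is integrable on balls because `3/2 < 2 = dim_ℝ ℂ`.
-/

open MeasureTheory Set Metric

lemma integrableOn_ball_norm_rpow_neg {E : Type*} [NormedAddCommGroup E] [NormedSpace ℝ E]
    [FiniteDimensional ℝ E] [MeasurableSpace E] [BorelSpace E] {μ : Measure E}
    [μ.IsAddHaarMeasure] (hd : 1 ≤ Module.finrank ℝ E) {α : ℝ} (hα : α < Module.finrank ℝ E)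
    (r : ℝ) : IntegrableOn (fun x : E => ‖x‖ ^ (-α)) (ball 0 r) μ :=
  integrableOn_ball_of_norm_le_rpow hd hα (C := 1)
    (Filter.Eventually.of_forall fun x => by
      rw [one_mul, Real.norm_of_nonneg (Real.rpow_nonneg (norm_nonneg x) _)])
    (measurable_norm.pow_const _).aestronglyMeasurable

lemma measurePreserving_sub_sub_prod {G : Type*} [AddGroup G] [MeasurableSpace G]
    [MeasurableAdd₂ G] [MeasurableNeg G] (μ : Measure G) [SFinite μ] [μ.IsAddRightInvariant] :
    MeasurePreserving (fun p : G × G × G => (p.1 - p.2.1, p.2.1 - p.2.2, p.2.2))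
      (μ.prod (μ.prod μ)) (μ.prod (μ.prod μ)) :=
  ((MeasurePreserving.id μ).prod (measurePreserving_sub_prod μ μ)).comp
    (((measurePreserving_prodAssoc μ μ μ).comp
      ((measurePreserving_sub_prod μ μ).prod (MeasurePreserving.id μ))).comp
      (measurePreserving_prodAssoc μ μ μ).symm)

lemma measurePreserving_perm_fin_three (α : Type*) [MeasureSpace α]
    [SigmaFinite (volume : Measure α)] (σ : Equiv.Perm (Fin 3)) :
    MeasurePreserving (fun z : Fin 3 → α => (z (σ 0), z (σ 1), z (σ 2))) volume volume := by
  have hsplit : MeasurePreserving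
      ((MeasurableEquiv.piFinSuccAbove (fun _ : Fin 3 => α) 0).trans
        ((MeasurableEquiv.refl α).prodCongr MeasurableEquiv.finTwoArrow)) volume volume :=
    ((MeasurePreserving.id volume).prod (volume_preserving_finTwoArrow α)).comp
      (volume_preserving_piFinSuccAbove (fun _ : Fin 3 => α) 0)
  exact hsplit.comp ((volume_measurePreserving_piCongrLeft (fun _ : Fin 3 => α) σ).symm _)

lemma one_div_mul_mul_le_sum_rpow_mul_rpow {a b c : ℝ} (ha : 0 ≤ a) (hb : 0 ≤ b) (hc : 0 ≤ c) :
    1 / (a * b * c) ≤ a ^ (-(3 / 2) : ℝ) * b ^ (-(3 / 2) : ℝ)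
      + b ^ (-(3 / 2) : ℝ) * c ^ (-(3 / 2) : ℝ) + c ^ (-(3 / 2) : ℝ) * a ^ (-(3 / 2) : ℝ) := by
  rcases ha.eq_or_lt with rfl | ha
  · simp only [zero_mul, div_zero]; positivity
  rcases hb.eq_or_lt with rfl | hb
  · simp only [mul_zero, zero_mul, div_zero]; positivity
  rcases hc.eq_or_lt with rfl | hc
  · simp only [mul_zero, div_zero]; positivity
  have hcube (t : ℝ) (ht : 0 < t) : t ^ (-(3 / 2) : ℝ) = (t ^ (-(1 / 2) : ℝ)) ^ 3 := by
    rw [← Real.rpow_natCast, ← Real.rpow_mul ht.le]; norm_num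
  have hinv (t : ℝ) (ht : 0 < t) : t⁻¹ = (t ^ (-(1 / 2) : ℝ)) ^ 2 := by
    rw [← Real.rpow_natCast, ← Real.rpow_mul ht.le]; norm_num [Real.rpow_neg_one]
  rw [one_div, mul_inv, mul_inv, hinv a ha, hinv b hb, hinv c hc, hcube a ha, hcube b hb,
    hcube c hc]
  set x := a ^ (-(1 / 2) : ℝ)
  set y := b ^ (-(1 / 2) : ℝ)
  set z := c ^ (-(1 / 2) : ℝ)
  -- `X³ + Y³ + Z³ - 3XYZ = (X + Y + Z) ((X - Y)² + (Y - Z)² + (Z - X)²) / 2` with `X = xy`,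
  -- `Y = yz`, `Z = zx`, and `XYZ = (xyz)²`
  have hsum : 0 ≤ x * y + y * z + z * x := by positivity
  nlinarith [mul_nonneg hsum (add_nonneg (add_nonneg (sq_nonneg (x * y - y * z))
    (sq_nonneg (y * z - z * x))) (sq_nonneg (z * x - x * y))), sq_nonneg (x * y * z)]

lemma integrableOn_polydisc_norm_sub_rpow_mul (σ : Equiv.Perm (Fin 3)) :
    IntegrableOn (fun z : Fin 3 → ℂ =>
        ‖z (σ 0) - z (σ 1)‖ ^ (-(3 / 2) : ℝ) * ‖z (σ 1) - z (σ 2)‖ ^ (-(3 / 2) : ℝ))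
      {z : Fin 3 → ℂ | ∀ i, ‖z i‖ < 1} := by
  have hball : IntegrableOn (fun w : ℂ => ‖w‖ ^ (-(3 / 2) : ℝ)) (ball 0 2) :=
    integrableOn_ball_norm_rpow_neg (by simp) (by norm_num) 2
  have hone : IntegrableOn (fun _ : ℂ => (1 : ℝ)) (ball 0 1) :=
    integrableOn_const measure_ball_lt_top.ne
  have hprod : IntegrableOn
      (fun p : ℂ × ℂ × ℂ => ‖p.1‖ ^ (-(3 / 2) : ℝ) * ‖p.2.1‖ ^ (-(3 / 2) : ℝ))
      (ball 0 2 ×ˢ ball 0 2 ×ˢ ball 0 1) := by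
    simpa [IntegrableOn, Measure.prod_restrict, ← Measure.volume_eq_prod] using
      hball.mul_prod (hball.mul_prod hone)
  have hΦ := ((measurePreserving_sub_sub_prod volume).comp
    (measurePreserving_perm_fin_three ℂ σ)).restrict_preimage
    (measurableSet_ball.prod (measurableSet_ball.prod measurableSet_ball) :
      MeasurableSet (ball (0 : ℂ) 2 ×ˢ ball (0 : ℂ) 2 ×ˢ ball (0 : ℂ) 1))
  refine IntegrableOn.mono_set (hΦ.integrable_comp_of_integrable hprod) fun z hz => ?_
  simp only [mem_preimage, Function.comp_apply, mem_prod, mem_ball_zero_iff]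
  exact ⟨(norm_sub_le _ _).trans_lt (by linarith [hz (σ 0), hz (σ 1)]),
    (norm_sub_le _ _).trans_lt (by linarith [hz (σ 1), hz (σ 2)]), hz (σ 2)⟩

/-- configuration-space case, `n = 3`: the density with first-order poles
along all components of the big diagonal is integrable on the open unit polydisc. -/
theorem stmt_14 :
    IntegrableOn
      (fun z : Fin 3 → ℂ => 1 / (‖z 0 - z 1‖ * ‖z 1 - z 2‖ * ‖z 2 - z 0‖))
      {z : Fin 3 → ℂ | ∀ i, ‖z i‖ < 1} := by
  have h₀ := integrableOn_polydisc_norm_sub_rpow_mul 1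
  have h₁ := integrableOn_polydisc_norm_sub_rpow_mul (finRotate 3)
  have h₂ := integrableOn_polydisc_norm_sub_rpow_mul (finRotate 3 ^ 2)
  refine ((h₀.add h₁).add h₂).mono' (Measurable.aestronglyMeasurable (by fun_prop))
    (Filter.Eventually.of_forall fun z => ?_)
  rw [Real.norm_of_nonneg (by positivity)]
  exact one_div_mul_mul_le_sum_rpow_mul_rpow (norm_nonneg _) (norm_nonneg _) (norm_nonneg _)
end
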